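/- arXiv:0903.1649 — 8 statements merged into one kernel-verified Lean document; each statement's English description precedes it below -/
import Mathlib

section
/- Let m > 0, let γ ∈ C¹([0,m]) with γ(s) > 0 for all s, and let u ∈ C¹([0,m]) with u(0) = 0. Then ∫₀^m (γu)'(s) · 1_{\{u > 0\}}(s) ds = γ(m) · max(u(m), 0), where 1_{\{u>0\}} is the indicator function of {s ∈ [0,m] : u(s) > 0}; in particular this integral is nonnegative (so the transport operator is dispersive). -/
open MeasureTheory Set

/-- For `γ ∈ C¹([0,m])` positive and `u ∈ C¹([0,m])` with `u(0) = 0`,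
`∫₀^m (γu)'(s) · 1_{{u > 0}}(s) ds = γ(m) · max(u(m), 0)`; in particular this integral is
nonnegative (dispersivity of the transport operator). -/
theorem stmt_5 (m : ℝ) (hm : 0 < m) (γ u : ℝ → ℝ)
    (hγ : ContDiffOn ℝ 1 γ (Icc 0 m))
    (hγpos : ∀ s ∈ Icc (0:ℝ) m, 0 < γ s)
    (hu : ContDiffOn ℝ 1 u (Icc 0 m))
    (hu0 : u 0 = 0) :
    ∫ s in Ioc (0:ℝ) m,
        deriv (fun t => γ t * u t) s * ({t : ℝ | 0 < u t}.indicator (fun _ => (1:ℝ)) s) =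
      γ m * max (u m) 0 := by
  set g : ℝ → ℝ := fun t => γ t * u t with hgdef
  have hgC : ContDiffOn ℝ 1 g (Icc 0 m) := hγ.mul hu
  have hgcont : ContinuousOn g (Icc 0 m) := hgC.continuousOn
  -- equivalence of positivity sets on `Icc 0 m`
  have hpos_iff : ∀ s ∈ Icc (0:ℝ) m, (0 < u s ↔ 0 < g s) := by
    intro s hs
    have hγs := hγpos s hs
    constructor
    · intro h; exact mul_pos hγs h
    · intro h
      have hg' : γ s * u s = g s := rfl
      nlinarith
  -- differentiability at interior points
  have hderivAt : ∀ x ∈ Ioo (0:ℝ) m, HasDerivAt g (deriv g x) x := by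
    intro x hx
    have hnx : Icc (0:ℝ) m ∈ nhds x := Icc_mem_nhds hx.1 hx.2
    exact ((hgC.contDiffAt hnx).differentiableAt one_ne_zero).hasDerivAt
  -- the open set and the countable exceptional set
  set A : Set ℝ := Ioo 0 m ∩ g ⁻¹' Ioi 0 with hAdef
  set C : Set ℝ := {x | x ∈ Ioo (0:ℝ) m ∧ g x = 0 ∧ 0 < deriv g x} with hCdef
  have hAopen : IsOpen A :=
    (hgcont.mono Ioo_subset_Icc_self).isOpen_inter_preimage isOpen_Ioo isOpen_Ioi
  -- for points of `C`, `g > 0` just to the right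
  have hCright : ∀ x ∈ C, ∃ y, x < y ∧ ∀ t ∈ Ioo x y, 0 < g t := by
    intro x hx
    obtain ⟨hxm, hgx, hdx⟩ := hx
    have hslope : Filter.Tendsto (slope g x) (nhdsWithin x {x}ᶜ) (nhds (deriv g x)) :=
      hasDerivAt_iff_tendsto_slope.mp (hderivAt x hxm)
    have hslope' : Filter.Tendsto (slope g x) (nhdsWithin x (Ioi x)) (nhds (deriv g x)) :=
      hslope.mono_left (nhdsWithin_mono x (fun t ht => ne_of_gt ht))
    have hev : ∀ᶠ t in nhdsWithin x (Ioi x), 0 < slope g x t :=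
      hslope'.eventually (eventually_gt_nhds hdx)
    rw [eventually_nhdsWithin_iff] at hev
    rcases Metric.eventually_nhds_iff.mp hev with ⟨ε, hε, hball⟩
    refine ⟨x + ε, by linarith, fun t ht => ?_⟩
    have htx : x < t := ht.1
    have hd : dist t x < ε := by
      rw [Real.dist_eq, abs_of_pos (by linarith)]; linarith [ht.2]
    have hst : 0 < slope g x t := hball hd htx
    have hseq : slope g x t = g t / (t - x) := by
      rw [slope_def_field, hgx, sub_zero]
    rw [hseq] at hst
    rcases div_pos_iff.mp hst with ⟨h, _⟩ | ⟨_, h⟩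
    · exact h
    · linarith
  -- `C` is countable
  have hCcount : C.Countable := by
    have : ∀ x ∈ C, ∃ y, x < y ∧ ∀ t ∈ Ioo x y, 0 < g t := hCright
    choose! y hy1 hy2 using this
    refine Set.PairwiseDisjoint.countable_of_Ioo (y := y) ?_ (fun x hx => hy1 x hx)
    intro a ha b hb hab
    refine Set.disjoint_left.mpr fun t hta htb => ?_
    rcases lt_or_gt_of_ne hab with h | h
    ·
      have hbya : b < y a := lt_trans htb.1 hta.2
      exact absurd (hy2 a ha b ⟨h, hbya⟩) (by rw [hb.2.1]; exact lt_irrefl 0)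
    · have hayb : a < y b := lt_trans hta.1 htb.2
      exact absurd (hy2 b hb a ⟨h, hayb⟩) (by rw [ha.2.1]; exact lt_irrefl 0)
  have hCmeas : MeasurableSet C := hCcount.measurableSet
  -- the candidate derivative
  set F' : ℝ → ℝ := (A ∪ C).indicator (deriv g) with hF'def
  set G : ℝ → ℝ := fun t => max (g t) 0 with hGdef
  have hGcont : ContinuousOn G (Icc 0 m) := hgcont.sup continuousOn_const
  -- one-sided derivative of G everywhere in the interior
  have hGderiv : ∀ x ∈ Ioo (0:ℝ) m, HasDerivWithinAt G (F' x) (Ioi x) x := by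
    intro x hx
    have hd := hderivAt x hx
    rcases lt_trichotomy (g x) 0 with h1 | h1 | h1
    · -- g x < 0 : G = 0 near x, F' x = 0
      have hxAC : x ∉ A ∪ C := by
        rintro (hA | hC)
        · exact absurd hA.2 (by simp [not_lt]; linarith)
        · exact absurd hC.2.1 (ne_of_lt h1)
      have hF0 : F' x = 0 := Set.indicator_of_notMem hxAC _
      rw [hF0]
      have hcont : ContinuousAt g x := hd.continuousAt
      have hev : ∀ᶠ t in nhds x, g t < 0 := Filter.Tendsto.eventually_lt_const h1 hcont
      have heq : G =ᶠ[nhds x] fun _ => (0:ℝ) :=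
        hev.mono fun t ht => max_eq_right ht.le
      exact ((hasDerivAt_const x (0:ℝ)).congr_of_eventuallyEq heq).hasDerivWithinAt
    · -- g x = 0
      rcases lt_trichotomy (deriv g x) 0 with h2 | h2 | h2
      · -- deriv g x < 0 : g < 0 on right, G = 0 there
        have hxAC : x ∉ A ∪ C := by
          rintro (hA | hC)
          · have := hA.2; simp only [Set.mem_preimage, Set.mem_Ioi] at this; linarith
          · linarith [hC.2.2]
        have hF0 : F' x = 0 := Set.indicator_of_notMem hxAC _
        rw [hF0]
        have hslope : Filter.Tendsto (slope g x) (nhdsWithin x (Ioi x)) (nhds (deriv g x)) :=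
          (hasDerivAt_iff_tendsto_slope.mp hd).mono_left
            (nhdsWithin_mono x fun t ht => ne_of_gt ht)
        have hev : ∀ᶠ t in nhdsWithin x (Ioi x), slope g x t < 0 :=
          hslope.eventually (eventually_lt_nhds h2)
        have hev' : ∀ᶠ t in nhdsWithin x (Ioi x), G t = 0 := by
          filter_upwards [hev, self_mem_nhdsWithin] with t ht ht'
          have htx : (0:ℝ) < t - x := sub_pos.mpr ht'
          have : g t / (t - x) < 0 := by
            have hseq : slope g x t = g t / (t - x) := by
              rw [slope_def_field, h1, sub_zero]
            rwa [hseq] at ht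
          have hgt : g t < 0 := by
            by_contra hcon
            push_neg at hcon
            exact absurd (div_nonneg hcon htx.le) (not_le.mpr this)
          exact max_eq_right hgt.le
        have hGx : G x = 0 := by simp [hGdef, h1]
        exact (hasDerivWithinAt_const x _ (0:ℝ)).congr_of_eventuallyEq
          (hev'.mono fun t ht => by simp [ht]) (by simp [hGx])
      · -- deriv g x = 0 : squeeze
        have hxAC : x ∉ A ∪ C := by
          rintro (hA | hC)
          · have := hA.2; simp only [Set.mem_preimage, Set.mem_Ioi] at this; linarith
          · linarith [hC.2.2]
        have hF0 : F' x = 0 := Set.indicator_of_notMem hxAC _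
        rw [hF0, hasDerivWithinAt_iff_tendsto]
        have hg0 : Filter.Tendsto (fun t => ‖t - x‖⁻¹ * ‖g t - g x - (t - x) • deriv g x‖)
            (nhds x) (nhds 0) := hasDerivAt_iff_tendsto.mp hd
        rw [h2] at hg0
        have hg0' : Filter.Tendsto (fun t => ‖t - x‖⁻¹ * ‖g t - g x‖)
            (nhdsWithin x (Ioi x)) (nhds 0) := by
          have := hg0.mono_left (nhdsWithin_le_nhds (s := Ioi x))
          simpa using this
        refine squeeze_zero (fun t => by positivity) (fun t => ?_) hg0'
        have hb : ‖G t - G x‖ ≤ ‖g t - g x‖ := by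
          simpa [hGdef, Real.norm_eq_abs] using abs_max_sub_max_le_abs (g t) (g x) 0
        calc ‖t - x‖⁻¹ * ‖G t - G x - (t - x) • (0:ℝ)‖
            = ‖t - x‖⁻¹ * ‖G t - G x‖ := by simp
          _ ≤ ‖t - x‖⁻¹ * ‖g t - g x‖ := by
              gcongr
      · -- deriv g x > 0 : g > 0 on right, G = g there
        have hxC : x ∈ C := ⟨hx, h1, h2⟩
        have hF0 : F' x = deriv g x := Set.indicator_of_mem (Set.mem_union_right A hxC) _
        rw [hF0]
        obtain ⟨y, hy1, hy2⟩ := hCright x hxC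
        have hev : ∀ᶠ t in nhdsWithin x (Ioi x), G t = g t := by
          have : Ioo x y ∈ nhdsWithin x (Ioi x) := Ioo_mem_nhdsGT hy1
          filter_upwards [this] with t ht
          exact max_eq_left (hy2 t ht).le
        exact (hd.hasDerivWithinAt).congr_of_eventuallyEq hev (by simp [hGdef, h1])
    · -- g x > 0 : G = g near x
      have hxA : x ∈ A := ⟨hx, h1⟩
      have hF0 : F' x = deriv g x := Set.indicator_of_mem (Set.mem_union_left C hxA) _
      rw [hF0]
      have hcont : ContinuousAt g x := hd.continuousAt
      have hev : ∀ᶠ t in nhds x, 0 < g t := Filter.Tendsto.eventually_const_lt h1 hcont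
      have heq : G =ᶠ[nhds x] g := hev.mono fun t ht => max_eq_left ht.le
      exact (hd.congr_of_eventuallyEq heq).hasDerivWithinAt
  -- integrability of F'
  have hF'meas : Measurable F' :=
    (measurable_deriv g).indicator (hAopen.measurableSet.union hCmeas)
  have hDcont : ContinuousOn (derivWithin g (Icc 0 m)) (Icc 0 m) :=
    hgC.continuousOn_derivWithin (uniqueDiffOn_Icc hm) le_rfl
  obtain ⟨M, hM⟩ := isCompact_Icc.exists_bound_of_continuousOn hDcont
  have hFbound : ∀ x, ‖F' x‖ ≤ max M 0 := by
    intro x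
    by_cases hx : x ∈ A ∪ C
    · have hxIoo : x ∈ Ioo (0:ℝ) m := by
        rcases hx with hA | hC
        · exact hA.1
        · exact hC.1
      have hD : derivWithin g (Icc 0 m) x = deriv g x :=
        derivWithin_of_mem_nhds (Icc_mem_nhds hxIoo.1 hxIoo.2)
      have : ‖F' x‖ = ‖deriv g x‖ := by rw [hF'def, Set.indicator_of_mem hx]
      rw [this, ← hD]
      exact le_trans (hM x (Ioo_subset_Icc_self hxIoo)) (le_max_left _ _)
    · rw [hF'def, Set.indicator_of_notMem hx]
      simp [le_max_right]
  have hF'int : IntervalIntegrable F' volume 0 m := by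
    rw [intervalIntegrable_iff_integrableOn_Ioc_of_le hm.le]
    exact Integrable.mono' ((integrableOn_const_iff (C := max M 0)).mpr (Or.inr measure_Ioc_lt_top))
      hF'meas.aestronglyMeasurable.restrict (Filter.Eventually.of_forall hFbound)
  -- the fundamental theorem of calculus
  have hFTC : ∫ y in (0:ℝ)..m, F' y = G m - G 0 :=
    intervalIntegral.integral_eq_sub_of_hasDeriv_right_of_le hm.le hGcont hGderiv hF'int
  -- a.e. equality of the integrand with F' on Ioc 0 m
  have hnull : volume (({m} : Set ℝ) ∪ C) = 0 :=
    measure_union_null (measure_singleton m) (hCcount.measure_zero volume)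
  have hae : ∀ᵐ x ∂(volume.restrict (Ioc (0:ℝ) m)),
      deriv g x * ({t : ℝ | 0 < u t}.indicator (fun _ => (1:ℝ)) x) = F' x := by
    have h1 : ∀ᵐ x ∂(volume.restrict (Ioc (0:ℝ) m)), x ∉ (({m} : Set ℝ) ∪ C) :=
      ae_restrict_of_ae (measure_eq_zero_iff_ae_notMem.mp hnull)
    have h2 : ∀ᵐ x ∂(volume.restrict (Ioc (0:ℝ) m)), x ∈ Ioc (0:ℝ) m :=
      ae_restrict_mem measurableSet_Ioc
    filter_upwards [h1, h2] with x hxn hxIoc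
    have hxm : x ≠ m := fun h => hxn (Or.inl (by simp [h]))
    have hxC : x ∉ C := fun h => hxn (Or.inr h)
    have hxIoo : x ∈ Ioo (0:ℝ) m := ⟨hxIoc.1, lt_of_le_of_ne hxIoc.2 hxm⟩
    have hiff := hpos_iff x (Ioo_subset_Icc_self hxIoo)
    by_cases hgx : 0 < g x
    · have hux : 0 < u x := hiff.mpr hgx
      rw [Set.indicator_of_mem (by exact hux : x ∈ {t : ℝ | 0 < u t}), mul_one,
        hF'def, Set.indicator_of_mem (Set.mem_union_left C (show x ∈ A from ⟨hxIoo, hgx⟩))]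
    · have hux : ¬ 0 < u x := fun h => hgx (hiff.mp h)
      rw [Set.indicator_of_notMem (by exact hux : x ∉ {t : ℝ | 0 < u t}), mul_zero,
        hF'def, Set.indicator_of_notMem]
      rintro (hA | hC)
      · exact hgx hA.2
      · exact hxC hC
  calc ∫ s in Ioc (0:ℝ) m, deriv g s * ({t : ℝ | 0 < u t}.indicator (fun _ => (1:ℝ)) s)
      = ∫ s in Ioc (0:ℝ) m, F' s := integral_congr_ae hae
    _ = ∫ y in (0:ℝ)..m, F' y := (intervalIntegral.integral_of_le hm.le).symm
    _ = G m - G 0 := hFTC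
    _ = γ m * max (u m) 0 := by
        have h0 : G 0 = 0 := by simp [hGdef, hgdef, hu0]
        have hm' : G m = γ m * max (u m) 0 := by
          rw [hGdef]
          simp only [hgdef]
          rw [mul_max_of_nonneg _ _ (hγpos m (right_mem_Icc.mpr hm.le)).le, mul_zero]
        rw [h0, hm', sub_zero]
end

section
/- For λ > 0, the linear operator R on L¹(0,m) defined by (Rh)(s) = exp(−∫₀^s λ/γ(y) dy) · ∫₀^s exp(∫₀^y λ/γ(z) dz) · (h(y)/γ(y)) dy (the resolvent of the transport operator with zero inflow boundary condition) is a compact bounded linear operator from L¹(0,m) to L¹(0,m). -/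
open MeasureTheory Set

open Filter Topology

lemma rankOne_compact {E F : Type*} [NormedAddCommGroup E] [NormedSpace ℝ E]
    [NormedAddCommGroup F] [NormedSpace ℝ F]
    (c : E →L[ℝ] ℝ) (e : F) : IsCompactOperator (c.smulRight e) := by
  rw [isCompactOperator_iff_exists_mem_nhds_image_subset_compact]
  refine ⟨Metric.closedBall 0 1, Metric.closedBall_mem_nhds 0 one_pos,
    (fun t : ℝ => t • e) '' (Metric.closedBall 0 (‖c‖ + 1)),
    (isCompact_closedBall (0:ℝ) (‖c‖+1)).image (by fun_prop), ?_⟩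
  rintro _ ⟨h, hh, rfl⟩
  rw [mem_closedBall_zero_iff] at hh
  refine ⟨c h, ?_, rfl⟩
  rw [Metric.mem_closedBall, dist_zero_right]
  calc ‖c h‖ ≤ ‖c‖ * ‖h‖ := c.le_opNorm h
  _ ≤ ‖c‖ + 1 := by nlinarith [norm_nonneg c]

lemma sum_compact {ι E F : Type*} [NormedAddCommGroup E] [NormedSpace ℝ E]
    [NormedAddCommGroup F] [NormedSpace ℝ F] (s : Finset ι) (f : ι → E →L[ℝ] F)
    (hf : ∀ i ∈ s, IsCompactOperator (f i)) :
    IsCompactOperator ⇑(∑ i ∈ s, f i) := by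
  classical
  rw [ContinuousLinearMap.coe_sum']
  induction s using Finset.induction with
  | empty => simpa using (isCompactOperator_zero : IsCompactOperator (0 : E → F))
  | @insert x s hx ih =>
      rw [Finset.sum_insert hx]
      exact (hf x (Finset.mem_insert_self x s)).add
        (ih fun i hi => hf i (Finset.mem_insert_of_mem hi))

lemma coeFn_sum {α : Type*} {mα : MeasurableSpace α} {μ : Measure α}
    {ι : Type*} (s : Finset ι) (f : ι → Lp ℝ 1 μ) :
    ⇑(∑ i ∈ s, f i) =ᵐ[μ] fun x => ∑ i ∈ s, f i x := by
  classical
  induction s using Finset.induction with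
  | empty => simp only [Finset.sum_empty]; exact Lp.coeFn_zero ℝ 1 μ
  | @insert x s hx ih =>
      rw [Finset.sum_insert hx]
      filter_upwards [Lp.coeFn_add (f x) (∑ i ∈ s, f i), ih] with y h1 h2
      rw [h1, Pi.add_apply, h2, Finset.sum_insert hx]

set_option maxHeartbeats 2000000 in
theorem key (m : ℝ) (hm : 0 < m) (a b : ℝ → ℝ) (B : ℝ)
    (ha_cont : ContinuousOn a (Icc 0 m)) (hb_cont : ContinuousOn b (Icc 0 m))
    (ha_le : ∀ s ∈ Ioc (0:ℝ) m, |a s| ≤ 1) (hb_le : ∀ s ∈ Ioc (0:ℝ) m, |b s| ≤ B) :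
    ∃ T : Lp ℝ 1 (volume.restrict (Ioc (0:ℝ) m)) →L[ℝ] Lp ℝ 1 (volume.restrict (Ioc (0:ℝ) m)),
      (∀ h : Lp ℝ 1 (volume.restrict (Ioc (0:ℝ) m)),
        (T h : ℝ → ℝ) =ᵐ[volume.restrict (Ioc (0:ℝ) m)]
          fun s => a s * ∫ y in (0:ℝ)..s, b y * h y ∂(volume.restrict (Ioc (0:ℝ) m))) ∧
      IsCompactOperator T := by
  set μ := volume.restrict (Ioc (0:ℝ) m) with hμdef
  have hμuniv : μ univ = ENNReal.ofReal m := by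
    rw [hμdef, Measure.restrict_apply_univ, Real.volume_Ioc, sub_zero]
  haveI : IsFiniteMeasure μ := ⟨by rw [hμuniv]; exact ENNReal.ofReal_lt_top⟩
  have hB0 : 0 ≤ B := le_trans (abs_nonneg _) (hb_le m ⟨hm, le_rfl⟩)
  have haM : AEStronglyMeasurable a μ :=
    (ha_cont.mono Ioc_subset_Icc_self).aestronglyMeasurable measurableSet_Ioc
  have hbM : AEStronglyMeasurable b μ :=
    (hb_cont.mono Ioc_subset_Icc_self).aestronglyMeasurable measurableSet_Ioc
  have int_bh : ∀ h : Lp ℝ 1 μ, Integrable (fun y => b y * h y) μ := by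
    intro h
    have hi : Integrable (⇑h) μ := L1.integrable_coeFn h
    refine Integrable.mono' (hi.norm.const_mul B) (hbM.mul hi.aestronglyMeasurable) ?_
    filter_upwards [ae_restrict_mem measurableSet_Ioc] with y hy
    rw [norm_mul]
    exact mul_le_mul_of_nonneg_right (by rw [Real.norm_eq_abs]; exact hb_le y hy)
      (norm_nonneg _)
  have hbh_norm : ∀ h : Lp ℝ 1 μ,
      (∀ᵐ y ∂μ, ‖b y * h y‖ ≤ B * ‖h y‖) := by
    intro h
    filter_upwards [ae_restrict_mem measurableSet_Ioc] with y hy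
    rw [norm_mul]
    exact mul_le_mul_of_nonneg_right (by rw [Real.norm_eq_abs]; exact hb_le y hy)
      (norm_nonneg _)
  set F : Lp ℝ 1 μ → ℝ → ℝ := fun h s => ∫ y in (0:ℝ)..s, b y * h y ∂μ with hFdef
  have hFcont : ∀ h, Continuous (F h) := fun h => (int_bh h).continuous_primitive 0
  have int_abs : ∀ h : Lp ℝ 1 μ, ∫ y, ‖b y * h y‖ ∂μ ≤ B * ‖h‖ := by
    intro h
    calc ∫ y, ‖b y * h y‖ ∂μ ≤ ∫ y, B * ‖h y‖ ∂μ :=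
          integral_mono_ae (int_bh h).norm ((L1.integrable_coeFn h).norm.const_mul B)
            (hbh_norm h)
    _ = B * ∫ y, ‖h y‖ ∂μ := integral_const_mul B _
    _ = B * ‖h‖ := by rw [← L1.norm_eq_integral_norm]
  have hFbound : ∀ (h : Lp ℝ 1 μ) (u : ℝ), 0 ≤ u → ‖F h u‖ ≤ B * ‖h‖ := by
    intro h u hu
    rw [hFdef]
    simp only
    rw [intervalIntegral.integral_of_le hu]
    calc ‖∫ y in Ioc 0 u, b y * h y ∂μ‖ ≤ ∫ y in Ioc 0 u, ‖b y * h y‖ ∂μ :=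
          norm_integral_le_integral_norm _
    _ ≤ ∫ y, ‖b y * h y‖ ∂μ :=
          setIntegral_le_integral (int_bh h).norm
            (Eventually.of_forall fun y => norm_nonneg _)
    _ ≤ B * ‖h‖ := int_abs h
  have hF_add : ∀ (h h' : Lp ℝ 1 μ) (s : ℝ), F (h + h') s = F h s + F h' s := by
    intro h h' s
    have h1 : ∀ᵐ y ∂μ, y ∈ uIoc (0:ℝ) s → b y * (h + h') y = b y * h y + b y * h' y := by
      filter_upwards [Lp.coeFn_add h h'] with y hy _
      rw [hy, Pi.add_apply, mul_add]
    rw [hFdef]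
    simp only
    rw [intervalIntegral.integral_congr_ae h1,
      intervalIntegral.integral_add (int_bh h).intervalIntegrable
        (int_bh h').intervalIntegrable]
  have hF_smul : ∀ (r : ℝ) (h : Lp ℝ 1 μ) (s : ℝ), F (r • h) s = r * F h s := by
    intro r h s
    have h1 : ∀ᵐ y ∂μ, y ∈ uIoc (0:ℝ) s → b y * (r • h) y = r * (b y * h y) := by
      filter_upwards [Lp.coeFn_smul r h] with y hy _
      rw [hy, Pi.smul_apply, smul_eq_mul]; ring
    rw [hFdef]
    simp only
    rw [intervalIntegral.integral_congr_ae h1, intervalIntegral.integral_const_mul]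
  set K : Lp ℝ 1 μ → ℝ → ℝ := fun h s => a s * F h s with hKdef
  have int_K : ∀ h : Lp ℝ 1 μ, Integrable (K h) μ := by
    intro h
    refine Integrable.mono' (integrable_const (B * ‖h‖))
      (haM.mul (hFcont h).aestronglyMeasurable) ?_
    filter_upwards [ae_restrict_mem measurableSet_Ioc] with s hs
    rw [norm_mul]
    calc ‖a s‖ * ‖F h s‖ ≤ 1 * (B * ‖h‖) := by
          apply mul_le_mul _ (hFbound h s hs.1.le) (norm_nonneg _) zero_le_one
          rw [Real.norm_eq_abs]; exact ha_le s hs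
    _ = B * ‖h‖ := one_mul _
  set T0 : Lp ℝ 1 μ →ₗ[ℝ] Lp ℝ 1 μ :=
    { toFun := fun h => (int_K h).toL1 (K h)
      map_add' := by
        intro h h'
        have hK : K (h + h') = K h + K h' := by
          funext s
          simp only [hKdef, Pi.add_apply, hF_add, mul_add]
        have e1 : (int_K (h + h')).toL1 (K (h + h'))
            = ((int_K h).add (int_K h')).toL1 (K h + K h') := by
          apply (Integrable.toL1_eq_toL1_iff _ _ _ _).mpr
          rw [hK]
        rw [e1, Integrable.toL1_add]
      map_smul' := by
        intro r h
        have hK : K (r • h) = r • K h := by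
          funext s
          simp only [hKdef, Pi.smul_apply, hF_smul, smul_eq_mul]; ring
        have e1 : (int_K (r • h)).toL1 (K (r • h))
            = ((int_K h).smul r).toL1 (r • K h) := by
          apply (Integrable.toL1_eq_toL1_iff _ _ _ _).mpr
          rw [hK]
        rw [e1, Integrable.toL1_smul' (K h) (int_K h) r]; rfl } with hT0def
  have hT0bound : ∀ h : Lp ℝ 1 μ, ‖T0 h‖ ≤ m * B * ‖h‖ := by
    intro h
    have e1 : ‖T0 h‖ = ∫ s, ‖K h s‖ ∂μ := L1.norm_of_fun_eq_integral_norm (int_K h)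
    rw [e1]
    calc ∫ s, ‖K h s‖ ∂μ ≤ ∫ _, B * ‖h‖ ∂μ := by
          refine integral_mono_ae (int_K h).norm (integrable_const _) ?_
          filter_upwards [ae_restrict_mem measurableSet_Ioc] with s hs
          rw [norm_mul]
          calc ‖a s‖ * ‖F h s‖ ≤ 1 * (B * ‖h‖) := by
                apply mul_le_mul _ (hFbound h s hs.1.le) (norm_nonneg _) zero_le_one
                rw [Real.norm_eq_abs]; exact ha_le s hs
          _ = B * ‖h‖ := one_mul _
    _ = m * B * ‖h‖ := by
          rw [integral_const, measureReal_def, hμuniv, ENNReal.toReal_ofReal hm.le, smul_eq_mul]; ring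
  set T : Lp ℝ 1 μ →L[ℝ] Lp ℝ 1 μ := T0.mkContinuous (m * B) hT0bound with hTdef
  have hNpos : ∀ n : ℕ, (0:ℝ) < (n:ℝ) + 1 := fun n => by positivity
  have hFbound' : ∀ (h : Lp ℝ 1 μ) (u : ℝ), ‖F h u‖ ≤ B * ‖h‖ := by
    intro h u
    rcases le_or_gt 0 u with hu | hu
    · exact hFbound h u hu
    · rw [hFdef]
      simp only
      rw [intervalIntegral.integral_of_ge hu.le, norm_neg]
      calc ‖∫ y in Ioc u 0, b y * h y ∂μ‖ ≤ ∫ y in Ioc u 0, ‖b y * h y‖ ∂μ :=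
            norm_integral_le_integral_norm _
      _ ≤ ∫ y, ‖b y * h y‖ ∂μ :=
            setIntegral_le_integral (int_bh h).norm
              (Eventually.of_forall fun y => norm_nonneg _)
      _ ≤ B * ‖h‖ := int_abs h
  set c : ℝ → (Lp ℝ 1 μ →L[ℝ] ℝ) := fun u => LinearMap.mkContinuous
    { toFun := fun h => F h u
      map_add' := fun h h' => hF_add h h' u
      map_smul' := fun r h => hF_smul r h u } B (fun h => hFbound' h u) with hcdef
  have int_a : Integrable a μ := by
    refine Integrable.mono' (integrable_const 1) haM ?_
    filter_upwards [ae_restrict_mem measurableSet_Ioc] with s hs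
    rw [Real.norm_eq_abs]; exact ha_le s hs
  have int_ind : ∀ u v : ℝ, Integrable ((Ioc u v).indicator a) μ :=
    fun u v => int_a.indicator measurableSet_Ioc
  set e : ℝ → ℝ → Lp ℝ 1 μ := fun u v => (int_ind u v).toL1 _ with hedef
  set p : ℕ → ℕ → ℝ := fun n j => (j : ℝ) * m / ((n:ℝ) + 1) with hpdef
  have hp_mono : ∀ n, Monotone (p n) := by
    intro n i j hij
    rw [hpdef]
    simp only
    gcongr
  have hp_nonneg : ∀ n j, 0 ≤ p n j := fun n j => by positivity
  have hp0 : ∀ n, p n 0 = 0 := fun n => by simp [hpdef]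
  have hp_le_m : ∀ n j, j ≤ n + 1 → p n j ≤ m := by
    intro n j hj
    rw [hpdef]
    simp only
    rw [div_le_iff₀ (hNpos n)]
    have : (j:ℝ) ≤ (n:ℝ) + 1 := by exact_mod_cast hj
    nlinarith
  have hp_top : ∀ n, p n (n + 1) = m := by
    intro n
    rw [hpdef]
    simp only
    push_cast
    field_simp
  have hp_meas : ∀ n j, j ≤ n → μ (Ioc (p n j) (p n (j+1))) = ENNReal.ofReal (m / ((n:ℝ)+1)) := by
    intro n j hj
    rw [hμdef, Measure.restrict_apply measurableSet_Ioc]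
    have hsub : Ioc (p n j) (p n (j+1)) ⊆ Ioc 0 m :=
      Ioc_subset_Ioc (hp_nonneg n j) (hp_le_m n (j+1) (by omega))
    rw [inter_eq_self_of_subset_left hsub, Real.volume_Ioc]
    congr 1
    rw [hpdef]
    simp only
    push_cast
    field_simp
    ring
  have exists_j : ∀ n, ∀ s ∈ Ioc (0:ℝ) m, ∃ j ≤ n, s ∈ Ioc (p n j) (p n (j+1)) := by
    intro n s hs
    have hN := hNpos n
    have hx0 : 0 < s * ((n:ℝ) + 1) / m := div_pos (mul_pos hs.1 hN) hm
    have hk1 : 1 ≤ ⌈s * ((n:ℝ) + 1) / m⌉₊ := Nat.one_le_ceil_iff.mpr hx0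
    set k := ⌈s * ((n:ℝ) + 1) / m⌉₊ with hkdef
    have hkle : k ≤ n + 1 := by
      rw [hkdef]
      apply Nat.ceil_le.mpr
      push_cast
      rw [div_le_iff₀ hm]
      nlinarith [hs.2]
    refine ⟨k - 1, by omega, ?_, ?_⟩
    · have hlt : ((k:ℝ) - 1) < s * ((n:ℝ)+1) / m := by
        have h2 := Nat.ceil_lt_add_one hx0.le
        rw [← hkdef] at h2
        linarith
      have hcast : ((k - 1 : ℕ) : ℝ) = (k : ℝ) - 1 := by
        push_cast [Nat.cast_sub hk1]; ring
      rw [hpdef]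
      simp only
      rw [hcast, div_lt_iff₀ hN]
      have h3 := (lt_div_iff₀ hm).mp hlt
      nlinarith
    · have hkk : k - 1 + 1 = k := by omega
      rw [hkk, hpdef]
      simp only
      rw [le_div_iff₀ hN]
      have hxk : s * ((n:ℝ)+1)/m ≤ (k:ℝ) := by rw [hkdef]; exact Nat.le_ceil _
      have h3 := (div_le_iff₀ hm).mp hxk
      nlinarith
  set S : ℕ → (Lp ℝ 1 μ →L[ℝ] Lp ℝ 1 μ) := fun n =>
    ∑ j ∈ Finset.range (n+1), (c (p n j)).smulRight (e (p n j) (p n (j+1))) with hSdef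
  have hScompact : ∀ n, IsCompactOperator (S n) := by
    intro n
    rw [hSdef]
    exact sum_compact _ _ fun j _ => rankOne_compact _ _
  -- the key norm estimate
  have hest : ∀ n (h : Lp ℝ 1 μ), ‖T h - S n h‖ ≤ m * B / ((n:ℝ)+1) * ‖h‖ := by
    intro n h
    have hN := hNpos n
    set D : ℕ → ℝ := fun j => ∫ y in Ioc (p n j) (p n (j+1)), ‖b y * h y‖ ∂μ with hDdef
    have hD_nonneg : ∀ j, 0 ≤ D j := fun j =>
      setIntegral_nonneg measurableSet_Ioc fun y _ => norm_nonneg _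
    set G : ℝ → ℝ := fun s =>
      ∑ j ∈ Finset.range (n+1), (Ioc (p n j) (p n (j+1))).indicator (fun _ => D j) s
      with hGdef
    have int_G : Integrable G μ := by
      apply integrable_finset_sum
      intro j _
      exact (integrable_const (D j)).indicator measurableSet_Ioc
    -- pointwise description of S n h
    have hSn : ⇑(S n h) =ᵐ[μ] fun s =>
        ∑ j ∈ Finset.range (n+1),
          (F h (p n j)) • ((Ioc (p n j) (p n (j+1))).indicator a s) := by
      have h1 : S n h = ∑ j ∈ Finset.range (n+1),
          (F h (p n j)) • e (p n j) (p n (j+1)) := by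
        rw [hSdef]
        simp only
        rw [ContinuousLinearMap.sum_apply]
        exact Finset.sum_congr rfl fun j _ => by
          rw [ContinuousLinearMap.smulRight_apply]; rfl
      rw [h1]
      refine (coeFn_sum _ _).trans ?_
      have h2 : ∀ j ∈ (Finset.range (n+1) : Set ℕ), ∀ᵐ x ∂μ,
          (F h (p n j) • e (p n j) (p n (j+1))) x
            = F h (p n j) • ((Ioc (p n j) (p n (j+1))).indicator a x) := by
        intro j _
        filter_upwards [Lp.coeFn_smul (F h (p n j)) (e (p n j) (p n (j+1))),
          (int_ind (p n j) (p n (j+1))).coeFn_toL1] with x hx1 hx2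
        rw [hx1, Pi.smul_apply, hx2]
      have h2' := (MeasureTheory.ae_ball_iff (Finset.countable_toSet (Finset.range (n+1)))).mpr h2
      filter_upwards [h2'] with x hx
      exact Finset.sum_congr rfl fun j hj => hx j (Finset.mem_coe.mpr hj)
    have hThK : ⇑(T h) =ᵐ[μ] K h := (int_K h).coeFn_toL1
    have key_ae : ∀ᵐ s ∂μ, ‖(T h) s - (S n h) s‖ ≤ G s := by
      filter_upwards [hThK, hSn, ae_restrict_mem measurableSet_Ioc]
        with s hTh hSh hs
      obtain ⟨j, hjn, hsj⟩ := exists_j n s hs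
      have hjmem : j ∈ Finset.range (n+1) := Finset.mem_range.mpr (by omega)
      have hnot : ∀ i, i ≠ j → s ∉ Ioc (p n i) (p n (i+1)) := by
        intro i hij hmem
        rcases lt_or_gt_of_ne hij with hlt | hgt
        · exact absurd hmem.2 (not_le.mpr (lt_of_le_of_lt (hp_mono n (by omega : i + 1 ≤ j)) hsj.1))
        · exact absurd hsj.2 (not_le.mpr (lt_of_le_of_lt (hp_mono n (by omega : j + 1 ≤ i)) hmem.1))
      have hSh2 : (S n h) s = F h (p n j) * a s := by
        rw [hSh]
        rw [Finset.sum_eq_single_of_mem j hjmem]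
        · rw [indicator_of_mem hsj, smul_eq_mul]
        · intro i _ hij
          rw [indicator_of_notMem (hnot i hij), smul_zero]
      have hGs : G s = D j := by
        rw [hGdef]
        simp only
        rw [Finset.sum_eq_single_of_mem j hjmem]
        · rw [indicator_of_mem hsj]
        · intro i _ hij
          rw [indicator_of_notMem (hnot i hij)]
      rw [hTh, hSh2, hGs]
      have hfact : K h s - F h (p n j) * a s = a s * (F h s - F h (p n j)) := by
        rw [hKdef]; ring
      rw [hfact, norm_mul]
      have hdiff : F h s - F h (p n j) = ∫ y in (p n j)..s, b y * h y ∂μ := by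
        rw [hFdef]
        simp only
        rw [intervalIntegral.integral_interval_sub_left (int_bh h).intervalIntegrable
          (int_bh h).intervalIntegrable]
      calc ‖a s‖ * ‖F h s - F h (p n j)‖ ≤ 1 * D j := by
            apply mul_le_mul
            · rw [Real.norm_eq_abs]; exact ha_le s hs
            · rw [hdiff, intervalIntegral.integral_of_le hsj.1.le]
              calc ‖∫ y in Ioc (p n j) s, b y * h y ∂μ‖
                  ≤ ∫ y in Ioc (p n j) s, ‖b y * h y‖ ∂μ :=
                    norm_integral_le_integral_norm _
              _ ≤ D j := by
                    rw [hDdef]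
                    apply setIntegral_mono_set ((int_bh h).norm.integrableOn)
                      (Eventually.of_forall fun y => norm_nonneg _)
                    exact HasSubset.Subset.eventuallyLE (Ioc_subset_Ioc_right hsj.2)
            · exact norm_nonneg _
            · exact zero_le_one
      _ = D j := one_mul _
    -- integrate
    have hTS : ‖T h - S n h‖ ≤ ∫ s, G s ∂μ := by
      rw [L1.norm_eq_integral_norm]
      refine integral_mono_ae (L1.integrable_coeFn _).norm int_G ?_
      filter_upwards [Lp.coeFn_sub (T h) (S n h), key_ae] with s h1 h2
      rw [h1, Pi.sub_apply]
      exact h2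
    have hGint : ∫ s, G s ∂μ = ∑ j ∈ Finset.range (n+1), (m / ((n:ℝ)+1)) * D j := by
      rw [hGdef]
      simp only
      rw [integral_finset_sum _ fun j _ => (integrable_const (D j)).indicator measurableSet_Ioc]
      refine Finset.sum_congr rfl fun j hj => ?_
      rw [integral_indicator_const _ measurableSet_Ioc, measureReal_def,
        hp_meas n j (by simpa using Nat.lt_succ_iff.mp (Finset.mem_range.mp hj)),
        smul_eq_mul, ENNReal.toReal_ofReal (by positivity)]
    have hDsum : ∑ j ∈ Finset.range (n+1), D j ≤ B * ‖h‖ := by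
      set Nf : ℕ → ℝ := fun k => ∫ y in (0:ℝ)..(p n k), ‖b y * h y‖ ∂μ with hNfdef
      have hD_eq : ∀ j, D j = Nf (j+1) - Nf j := by
        intro j
        rw [hNfdef, hDdef]
        simp only
        rw [intervalIntegral.integral_interval_sub_left (int_bh h).norm.intervalIntegrable
          (int_bh h).norm.intervalIntegrable,
          intervalIntegral.integral_of_le (hp_mono n (by omega : j ≤ j + 1))]
      calc ∑ j ∈ Finset.range (n+1), D j
          = Nf (n+1) - Nf 0 := by
            rw [Finset.sum_congr rfl fun j _ => hD_eq j, Finset.sum_range_sub]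
      _ = Nf (n+1) := by
            rw [hNfdef]; simp [hp0 n]
      _ ≤ B * ‖h‖ := by
            rw [hNfdef]
            simp only
            rw [hp_top n, intervalIntegral.integral_of_le hm.le]
            calc ∫ y in Ioc 0 m, ‖b y * h y‖ ∂μ ≤ ∫ y, ‖b y * h y‖ ∂μ :=
                  setIntegral_le_integral (int_bh h).norm
                    (Eventually.of_forall fun y => norm_nonneg _)
            _ ≤ B * ‖h‖ := int_abs h
    calc ‖T h - S n h‖ ≤ ∫ s, G s ∂μ := hTS
    _ = (m / ((n:ℝ)+1)) * ∑ j ∈ Finset.range (n+1), D j := by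
          rw [hGint, Finset.mul_sum]
    _ ≤ (m / ((n:ℝ)+1)) * (B * ‖h‖) := by
          apply mul_le_mul_of_nonneg_left hDsum (by positivity)
    _ = m * B / ((n:ℝ)+1) * ‖h‖ := by ring
  have hop : ∀ n, ‖T - S n‖ ≤ m * B / ((n:ℝ)+1) := by
    intro n
    apply ContinuousLinearMap.opNorm_le_bound _ (by positivity)
    intro h
    rw [ContinuousLinearMap.sub_apply]
    exact hest n h
  have htend : Tendsto S atTop (𝓝 T) := by
    rw [tendsto_iff_norm_sub_tendsto_zero]
    have h1 : Tendsto (fun n : ℕ => m * B / ((n:ℝ) + 1)) atTop (𝓝 0) := by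
      apply Tendsto.div_atTop tendsto_const_nhds
      exact tendsto_atTop_add_const_right atTop 1 tendsto_natCast_atTop_atTop
    refine squeeze_zero (fun n => norm_nonneg _) (fun n => ?_) h1
    rw [norm_sub_rev]
    exact hop n
  refine ⟨T, fun h => ?_, ?_⟩
  · exact (int_K h).coeFn_toL1
  · exact isCompactOperator_of_tendsto htend (Eventually.of_forall hScompact)

/-- For `λ > 0`, the resolvent operator
`(Rh)(s) = exp(−∫₀^s λ/γ) ∫₀^s exp(∫₀^y λ/γ) h(y)/γ(y) dy` of the transport operator with
zero inflow boundary condition is a compact bounded linear operator on `L¹(0,m)`. -/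
theorem stmt_9 (m : ℝ) (hm : 0 < m) (γ γd : ℝ → ℝ)
    (hγ : ∀ s ∈ Icc (0:ℝ) m, HasDerivWithinAt γ (γd s) (Icc 0 m) s)
    (hγd : ContinuousOn γd (Icc 0 m))
    (hγpos : ∀ s ∈ Icc (0:ℝ) m, 0 < γ s)
    (l : ℝ) (hl : 0 < l) :
    ∃ R : Lp ℝ 1 (volume.restrict (Ioc (0:ℝ) m)) →L[ℝ]
          Lp ℝ 1 (volume.restrict (Ioc (0:ℝ) m)),
      (∀ h : Lp ℝ 1 (volume.restrict (Ioc (0:ℝ) m)),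
        (R h : ℝ → ℝ) =ᵐ[volume.restrict (Ioc (0:ℝ) m)]
          fun s => Real.exp (-∫ y in (0:ℝ)..s, l / γ y) *
            ∫ y in (0:ℝ)..s, Real.exp (∫ z in (0:ℝ)..y, l / γ z) * (h y / γ y)) ∧
      IsCompactOperator R := by
  have hγc : ContinuousOn γ (Icc 0 m) := fun s hs => (hγ s hs).continuousWithinAt
  have hγne : ∀ s ∈ Icc (0:ℝ) m, γ s ≠ 0 := fun s hs => (hγpos s hs).ne'
  have hfc : ContinuousOn (fun z => l / γ z) (Icc 0 m) := continuousOn_const.div hγc hγne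
  have hfi : IntegrableOn (fun z => l / γ z) (Icc 0 m) volume := hfc.integrableOn_Icc
  set Φ : ℝ → ℝ := fun s => ∫ z in (0:ℝ)..s, l / γ z with hΦdef
  have hΦc : ContinuousOn Φ (Icc 0 m) := by
    have := intervalIntegral.continuousOn_primitive_interval
      (a := 0) (b := m) (μ := volume) (f := fun z => l / γ z)
      (by rwa [uIcc_of_le hm.le])
    rwa [uIcc_of_le hm.le] at this
  have hii : ∀ u v, u ∈ Icc (0:ℝ) m → v ∈ Icc (0:ℝ) m → u ≤ v →
      IntervalIntegrable (fun z => l / γ z) volume u v := by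
    intro u v hu hv huv
    apply IntegrableOn.intervalIntegrable
    rw [uIcc_of_le huv]
    exact hfi.mono_set (Icc_subset_Icc hu.1 hv.2)
  have hΦnn : ∀ s ∈ Icc (0:ℝ) m, 0 ≤ Φ s := by
    intro s hs
    apply intervalIntegral.integral_nonneg hs.1
    intro u hu
    exact div_nonneg hl.le (hγpos u ⟨hu.1, le_trans hu.2 hs.2⟩).le
  have hΦle : ∀ s ∈ Icc (0:ℝ) m, Φ s ≤ Φ m := by
    intro s hs
    have h1 := hii 0 s (left_mem_Icc.mpr hm.le) hs hs.1
    have h2 := hii 0 m (left_mem_Icc.mpr hm.le) (right_mem_Icc.mpr hm.le) hm.le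
    have h3 : Φ m - Φ s = ∫ z in s..m, l / γ z :=
      intervalIntegral.integral_interval_sub_left h2 h1
    have h4 : 0 ≤ ∫ z in s..m, l / γ z := by
      apply intervalIntegral.integral_nonneg hs.2
      intro u hu
      exact div_nonneg hl.le (hγpos u ⟨le_trans hs.1 hu.1, hu.2⟩).le
    linarith
  obtain ⟨cγ, hcγ_mem, hcγ_min⟩ :=
    isCompact_Icc.exists_isMinOn (nonempty_Icc.mpr hm.le) hγc
  have hcγ_pos : 0 < γ cγ := hγpos _ hcγ_mem
  set a : ℝ → ℝ := fun s => Real.exp (-Φ s) with hadef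
  set b : ℝ → ℝ := fun y => Real.exp (Φ y) / γ y with hbdef
  set B : ℝ := Real.exp (Φ m) / γ cγ with hBdef
  have ha_cont : ContinuousOn a (Icc 0 m) := Real.continuous_exp.comp_continuousOn hΦc.neg
  have hb_cont : ContinuousOn b (Icc 0 m) :=
    (Real.continuous_exp.comp_continuousOn hΦc).div hγc hγne
  have ha_le : ∀ s ∈ Ioc (0:ℝ) m, |a s| ≤ 1 := by
    intro s hs
    rw [hadef]
    simp only
    rw [abs_of_pos (Real.exp_pos _), Real.exp_le_one_iff, neg_nonpos]
    exact hΦnn s ⟨hs.1.le, hs.2⟩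
  have hb_le : ∀ y ∈ Ioc (0:ℝ) m, |b y| ≤ B := by
    intro y hy
    have hymem : y ∈ Icc (0:ℝ) m := ⟨hy.1.le, hy.2⟩
    have hγy := hγpos y hymem
    rw [hbdef, hBdef]
    simp only
    rw [abs_of_pos (div_pos (Real.exp_pos _) hγy)]
    exact div_le_div₀ (Real.exp_pos _).le (Real.exp_le_exp.mpr (hΦle y hymem))
      hcγ_pos (hcγ_min hymem)
  obtain ⟨T, hT, hTc⟩ := key m hm a b B ha_cont hb_cont ha_le hb_le
  refine ⟨T, fun h => ?_, hTc⟩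
  refine (hT h).trans ?_
  filter_upwards [ae_restrict_mem measurableSet_Ioc] with s hs
  have h1 : (∫ y in (0:ℝ)..s, b y * h y ∂(volume.restrict (Ioc (0:ℝ) m)))
      = ∫ y in (0:ℝ)..s, Real.exp (∫ z in (0:ℝ)..y, l / γ z) * (h y / γ y) := by
    rw [intervalIntegral.integral_of_le hs.1.le, intervalIntegral.integral_of_le hs.1.le,
      Measure.restrict_restrict measurableSet_Ioc, Ioc_inter_Ioc, max_self,
      min_eq_left hs.2]
    have hfun : (fun y => b y * h y)
        = fun y => Real.exp (∫ z in (0:ℝ)..y, l / γ z) * (h y / γ y) := by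
      funext y
      rw [hbdef]
      simp only [hΦdef]
      rw [div_mul_eq_mul_div, mul_div_assoc]
    rw [hfun]
  rw [h1]
end

section
/- The function K : ℝ → ℝ is continuous and strictly decreasing (strictly antitone). -/
open MeasureTheory Set intervalIntegral

private theorem aux_K (m : ℝ) (hm : 0 < m) (γ g β₁ β₂ : ℝ → ℝ)
    (hγ : Continuous γ) (hγpos : ∀ x, 0 < γ x)
    (hg : Continuous g) (hβ₁ : Continuous β₁) (hβ₁nn : ∀ x, 0 ≤ β₁ x)
    (hβ₂ : Continuous β₂) (hβ₂nn : ∀ x, 0 ≤ β₂ x)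
    (y₀ s₀ : ℝ) (hy₀ : 0 ≤ y₀) (hy₀s₀ : y₀ < s₀) (hs₀ : s₀ ≤ m)
    (hβ₁pos : 0 < β₁ y₀) (hβ₂pos : 0 < β₂ s₀)
    (K : ℝ → ℝ)
    (hK : ∀ l : ℝ, K l = ∫ s in (0:ℝ)..m, β₂ s *
        ∫ y in (0:ℝ)..s, (β₁ y / γ y) *
          Real.exp (-∫ r in y..s, (l + g r) / γ r)) :
    Continuous K ∧ StrictAnti K := by
  have hγne : ∀ x, γ x ≠ 0 := fun x => (hγpos x).ne'
  have hinv : Continuous fun r => (γ r)⁻¹ := hγ.inv₀ hγne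
  have hq : Continuous fun r => g r / γ r := hg.div hγ hγne
  set P : ℝ → ℝ := fun t => ∫ r in (0:ℝ)..t, (γ r)⁻¹ with hPdef
  set Q : ℝ → ℝ := fun t => ∫ r in (0:ℝ)..t, g r / γ r with hQdef
  have hP : Continuous P :=
    intervalIntegral.continuous_primitive (fun a b => hinv.intervalIntegrable a b) 0
  have hQ : Continuous Q :=
    intervalIntegral.continuous_primitive (fun a b => hq.intervalIntegrable a b) 0
  have hPsub : ∀ y s : ℝ, P s - P y = ∫ r in y..s, (γ r)⁻¹ := fun y s =>
    integral_interval_sub_left (hinv.intervalIntegrable 0 s) (hinv.intervalIntegrable 0 y)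
  have hQsub : ∀ y s : ℝ, Q s - Q y = ∫ r in y..s, g r / γ r := fun y s =>
    integral_interval_sub_left (hq.intervalIntegrable 0 s) (hq.intervalIntegrable 0 y)
  have hsplit : ∀ (l y s : ℝ), (∫ r in y..s, (l + g r) / γ r)
      = l * (P s - P y) + (Q s - Q y) := by
    intro l y s
    rw [hPsub, hQsub, ← intervalIntegral.integral_const_mul,
      ← intervalIntegral.integral_add (show IntervalIntegrable (fun r => l * (γ r)⁻¹) volume y s from (continuous_const.mul hinv).intervalIntegrable y s)
        (hq.intervalIntegrable y s)]
    apply intervalIntegral.integral_congr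
    intro r _
    field_simp
  have hb : Continuous fun y => β₁ y / γ y := hβ₁.div hγ hγne
  have hbnn : ∀ y, 0 ≤ β₁ y / γ y := fun y => div_nonneg (hβ₁nn y) (hγpos y).le
  -- the jointly continuous inner integrand
  have hΦ : Continuous fun q : (ℝ × ℝ) × ℝ =>
      (β₁ q.2 / γ q.2) * Real.exp (-(q.1.1 * (P q.1.2 - P q.2) + (Q q.1.2 - Q q.2))) := by
    apply Continuous.mul (hb.comp continuous_snd)
    apply Real.continuous_exp.comp
    fun_prop
  -- the jointly continuous inner integral
  have hI : Continuous fun p : ℝ × ℝ => ∫ y in (0:ℝ)..p.2,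
      (β₁ y / γ y) * Real.exp (-(p.1 * (P p.2 - P y) + (Q p.2 - Q y))) := by
    exact continuous_parametric_intervalIntegral_of_continuous
      (f := fun p : ℝ × ℝ => fun y : ℝ =>
        (β₁ y / γ y) * Real.exp (-(p.1 * (P p.2 - P y) + (Q p.2 - Q y))))
      (μ := volume) hΦ continuous_snd
  have hH : Continuous fun p : ℝ × ℝ => β₂ p.2 * ∫ y in (0:ℝ)..p.2,
      (β₁ y / γ y) * Real.exp (-(p.1 * (P p.2 - P y) + (Q p.2 - Q y))) :=
    (hβ₂.comp continuous_snd).mul hI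
  have hKeq : K = fun l => ∫ s in (0:ℝ)..m, β₂ s * ∫ y in (0:ℝ)..s,
      (β₁ y / γ y) * Real.exp (-(l * (P s - P y) + (Q s - Q y))) := by
    funext l
    rw [hK l]
    simp only [hsplit]
  constructor
  · rw [hKeq]
    exact continuous_parametric_intervalIntegral_of_continuous'
      (f := fun l : ℝ => fun s : ℝ => β₂ s * ∫ y in (0:ℝ)..s,
        (β₁ y / γ y) * Real.exp (-(l * (P s - P y) + (Q s - Q y))))
      (μ := volume) hH 0 m
  · intro l₁ l₂ hl
    rw [hKeq]
    -- pointwise inequality of the inner integrands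
    have hPnn : ∀ y s : ℝ, y ≤ s → 0 ≤ P s - P y := by
      intro y s hys
      rw [hPsub]
      exact intervalIntegral.integral_nonneg hys fun r _ => (inv_pos.mpr (hγpos r)).le
    have hptle : ∀ s : ℝ, ∀ y : ℝ, y ≤ s →
        (β₁ y / γ y) * Real.exp (-(l₂ * (P s - P y) + (Q s - Q y)))
          ≤ (β₁ y / γ y) * Real.exp (-(l₁ * (P s - P y) + (Q s - Q y))) := by
      intro s y hys
      have := mul_le_mul_of_nonneg_right hl.le (hPnn y s hys)
      exact mul_le_mul_of_nonneg_left (Real.exp_le_exp.2 (by linarith)) (hbnn y)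
    have hIcont : ∀ l : ℝ, Continuous fun s => ∫ y in (0:ℝ)..s,
        (β₁ y / γ y) * Real.exp (-(l * (P s - P y) + (Q s - Q y))) := by
      intro l
      refine continuous_parametric_intervalIntegral_of_continuous
        (f := fun s : ℝ => fun y : ℝ =>
          (β₁ y / γ y) * Real.exp (-(l * (P s - P y) + (Q s - Q y))))
        (μ := volume) ?_ continuous_id
      exact (hb.comp continuous_snd).mul (Real.continuous_exp.comp (by fun_prop))
    have hHcont : ∀ l : ℝ, Continuous fun s => β₂ s * ∫ y in (0:ℝ)..s,
        (β₁ y / γ y) * Real.exp (-(l * (P s - P y) + (Q s - Q y))) :=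
      fun l => hβ₂.mul (hIcont l)
    have hinteg : ∀ (l s : ℝ), IntervalIntegrable (fun y =>
        (β₁ y / γ y) * Real.exp (-(l * (P s - P y) + (Q s - Q y)))) volume 0 s := by
      intro l s
      have : Continuous fun y => (β₁ y / γ y) *
          Real.exp (-(l * (P s - P y) + (Q s - Q y))) := by
        apply hb.mul (Real.continuous_exp.comp _)
        fun_prop
      exact this.intervalIntegrable 0 s
    -- inner integral comparison (weak)
    have hinnerle : ∀ s ∈ Ioc (0:ℝ) m,
        β₂ s * (∫ y in (0:ℝ)..s, (β₁ y / γ y) *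
            Real.exp (-(l₂ * (P s - P y) + (Q s - Q y))))
          ≤ β₂ s * ∫ y in (0:ℝ)..s, (β₁ y / γ y) *
            Real.exp (-(l₁ * (P s - P y) + (Q s - Q y))) := by
      intro s hs
      refine mul_le_mul_of_nonneg_left ?_ (hβ₂nn s)
      exact intervalIntegral.integral_mono_on hs.1.le (hinteg l₂ s) (hinteg l₁ s)
        (fun y hy => hptle s y hy.2)
    -- strict inequality at s₀
    have hs₀pos : 0 < s₀ := lt_of_le_of_lt hy₀ hy₀s₀
    have hPpos : 0 < P s₀ - P y₀ := by
      rw [hPsub]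
      exact intervalIntegral.intervalIntegral_pos_of_pos
        (hinv.intervalIntegrable y₀ s₀) (fun r => inv_pos.mpr (hγpos r)) hy₀s₀
    have hstrict : β₂ s₀ * (∫ y in (0:ℝ)..s₀, (β₁ y / γ y) *
          Real.exp (-(l₂ * (P s₀ - P y) + (Q s₀ - Q y))))
        < β₂ s₀ * ∫ y in (0:ℝ)..s₀, (β₁ y / γ y) *
          Real.exp (-(l₁ * (P s₀ - P y) + (Q s₀ - Q y))) := by
      refine mul_lt_mul_of_pos_left ?_ hβ₂pos
      refine intervalIntegral.integral_lt_integral_of_continuousOn_of_le_of_exists_lt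
        hs₀pos ?_ ?_
        (fun y hy => hptle s₀ y hy.2) ⟨y₀, ⟨hy₀, hy₀s₀.le⟩, ?_⟩
      · exact ((hb.mul (Real.continuous_exp.comp (by fun_prop))).continuousOn)
      · exact ((hb.mul (Real.continuous_exp.comp (by fun_prop))).continuousOn)
      · have h1 : l₁ * (P s₀ - P y₀) < l₂ * (P s₀ - P y₀) :=
          mul_lt_mul_of_pos_right hl hPpos
        exact mul_lt_mul_of_pos_left (Real.exp_lt_exp.2 (by linarith))
          (div_pos hβ₁pos (hγpos y₀))
    refine intervalIntegral.integral_lt_integral_of_continuousOn_of_le_of_exists_lt hm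
      ((hHcont l₂).continuousOn) ((hHcont l₁).continuousOn)
      hinnerle ⟨s₀, ⟨hs₀pos.le, hs₀⟩, hstrict⟩

/-- The characteristic function `K` is continuous and strictly decreasing. -/
theorem stmt_10 (m : ℝ) (hm : 0 < m) (γ₁ γ₁d : ℝ → ℝ)
    (hγ₁ : ∀ s ∈ Icc (0:ℝ) m, HasDerivWithinAt γ₁ (γ₁d s) (Icc 0 m) s)
    (hγ₁d : ContinuousOn γ₁d (Icc 0 m))
    (hγ₁pos : ∀ s ∈ Icc (0:ℝ) m, 0 < γ₁ s)
    (μ c₁ : ℝ → ℝ)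
    (hμ : ContinuousOn μ (Icc 0 m)) (hμnn : ∀ s ∈ Icc (0:ℝ) m, 0 ≤ μ s)
    (hc₁ : ContinuousOn c₁ (Icc 0 m)) (hc₁nn : ∀ s ∈ Icc (0:ℝ) m, 0 ≤ c₁ s)
    (β₁ β₂ : ℝ → ℝ)
    (hβ₁ : ContinuousOn β₁ (Icc 0 m)) (hβ₁nn : ∀ s ∈ Icc (0:ℝ) m, 0 ≤ β₁ s)
    (hβ₂ : ContinuousOn β₂ (Icc 0 m)) (hβ₂nn : ∀ s ∈ Icc (0:ℝ) m, 0 ≤ β₂ s)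
    (y₀ s₀ : ℝ) (hy₀ : 0 ≤ y₀) (hy₀s₀ : y₀ < s₀) (hs₀ : s₀ ≤ m)
    (hβ₁pos : 0 < β₁ y₀) (hβ₂pos : 0 < β₂ s₀)
    (K : ℝ → ℝ)
    (hK : ∀ l : ℝ, K l = ∫ s in (0:ℝ)..m, β₂ s *
        ∫ y in (0:ℝ)..s, (β₁ y / γ₁ y) *
          Real.exp (-∫ r in y..s, (l + μ r + c₁ r + γ₁d r) / γ₁ r))
    :
    Continuous K ∧ StrictAnti K := by
  set π : ℝ → ℝ := fun x => ((projIcc (0:ℝ) m hm.le x : Icc (0:ℝ) m) : ℝ) with hπdef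
  have hπ : Continuous π := continuous_subtype_val.comp continuous_projIcc
  have hπmem : ∀ x, π x ∈ Icc (0:ℝ) m := fun x => (projIcc (0:ℝ) m hm.le x).2
  have hπeq : ∀ x ∈ Icc (0:ℝ) m, π x = x := fun x hx => by
    simp [hπdef, projIcc_of_mem hm.le hx]
  have hIccm : uIcc (0:ℝ) m = Icc 0 m := uIcc_of_le hm.le
  refine aux_K m hm (γ₁ ∘ π)
    (fun r => μ (π r) + c₁ (π r) + γ₁d (π r)) (β₁ ∘ π) (β₂ ∘ π)
    ((show ContinuousOn γ₁ (Icc 0 m) from fun x hx => (hγ₁ x hx).continuousWithinAt).comp_continuous hπ hπmem) (fun x => hγ₁pos _ (hπmem x))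
    (((hμ.comp_continuous hπ hπmem).add (hc₁.comp_continuous hπ hπmem)).add
      (hγ₁d.comp_continuous hπ hπmem))
    (hβ₁.comp_continuous hπ hπmem) (fun x => hβ₁nn _ (hπmem x))
    (hβ₂.comp_continuous hπ hπmem) (fun x => hβ₂nn _ (hπmem x))
    y₀ s₀ hy₀ hy₀s₀ hs₀ ?_ ?_ K ?_
  · show 0 < β₁ (π y₀)
    rwa [hπeq y₀ ⟨hy₀, hy₀s₀.le.trans hs₀⟩]
  · show 0 < β₂ (π s₀)
    rwa [hπeq s₀ ⟨hy₀.trans hy₀s₀.le, hs₀⟩]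
  · intro l
    rw [hK l]
    apply intervalIntegral.integral_congr
    intro s hs
    rw [hIccm] at hs
    have hβ₂s : β₂ (π s) = β₂ s := by rw [hπeq s hs]
    simp only [Function.comp_apply, hβ₂s]
    congr 1
    apply intervalIntegral.integral_congr
    intro y hy
    have hy' : y ∈ Icc (0:ℝ) m := by
      have : uIcc (0:ℝ) s ⊆ Icc 0 m := by
        rw [uIcc_of_le hs.1]
        exact Icc_subset_Icc le_rfl hs.2
      exact this hy
    simp only [Function.comp_apply, hπeq y hy']
    congr 2
    rw [neg_inj]
    apply intervalIntegral.integral_congr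
    intro r hr
    have hr' : r ∈ Icc (0:ℝ) m := by
      have : uIcc y s ⊆ Icc 0 m := by
        rw [← hIccm]
        exact uIcc_subset_uIcc (by rw [hIccm]; exact hy') (by rw [hIccm]; exact hs)
      exact this hr
    simp only [hπeq r hr']
    ring
end

section
/- K(λ) tends to 0 as λ → +∞ and K(λ) tends to +∞ as λ → −∞. -/
open MeasureTheory Set intervalIntegral

set_option maxHeartbeats 2000000 in
/-- `K(λ) → 0` as `λ → +∞` and `K(λ) → +∞` as `λ → −∞`. -/
theorem stmt_11 (m : ℝ) (hm : 0 < m) (γ₁ γ₁d : ℝ → ℝ)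
    (hγ₁ : ∀ s ∈ Icc (0:ℝ) m, HasDerivWithinAt γ₁ (γ₁d s) (Icc 0 m) s)
    (hγ₁d : ContinuousOn γ₁d (Icc 0 m))
    (hγ₁pos : ∀ s ∈ Icc (0:ℝ) m, 0 < γ₁ s)
    (μ c₁ : ℝ → ℝ)
    (hμ : ContinuousOn μ (Icc 0 m)) (hμnn : ∀ s ∈ Icc (0:ℝ) m, 0 ≤ μ s)
    (hc₁ : ContinuousOn c₁ (Icc 0 m)) (hc₁nn : ∀ s ∈ Icc (0:ℝ) m, 0 ≤ c₁ s)
    (β₁ β₂ : ℝ → ℝ)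
    (hβ₁ : ContinuousOn β₁ (Icc 0 m)) (hβ₁nn : ∀ s ∈ Icc (0:ℝ) m, 0 ≤ β₁ s)
    (hβ₂ : ContinuousOn β₂ (Icc 0 m)) (hβ₂nn : ∀ s ∈ Icc (0:ℝ) m, 0 ≤ β₂ s)
    (y₀ s₀ : ℝ) (hy₀ : 0 ≤ y₀) (hy₀s₀ : y₀ < s₀) (hs₀ : s₀ ≤ m)
    (hβ₁pos : 0 < β₁ y₀) (hβ₂pos : 0 < β₂ s₀)
    (K : ℝ → ℝ)
    (hK : ∀ l : ℝ, K l = ∫ s in (0:ℝ)..m, β₂ s *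
        ∫ y in (0:ℝ)..s, (β₁ y / γ₁ y) *
          Real.exp (-∫ r in y..s, (l + μ r + c₁ r + γ₁d r) / γ₁ r))
    :
    Filter.Tendsto K Filter.atTop (nhds 0) ∧ Filter.Tendsto K Filter.atBot Filter.atTop := by
  have hm0 : (0:ℝ) ≤ m := hm.le
  have huIcc : uIcc (0:ℝ) m = Icc 0 m := uIcc_of_le hm0
  set g : ℝ → ℝ := fun r => μ r + c₁ r + γ₁d r with hgdef
  have hγ₁cont : ContinuousOn γ₁ (Icc 0 m) := fun s hs => (hγ₁ s hs).continuousWithinAt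
  have hγ₁ne : ∀ r ∈ Icc (0:ℝ) m, γ₁ r ≠ 0 := fun r hr => (hγ₁pos r hr).ne'
  have hgcont : ContinuousOn g (Icc 0 m) := (hμ.add hc₁).add hγ₁d
  set h : ℝ → ℝ → ℝ := fun l r => (l + g r) / γ₁ r with hhdef
  have hhcont : ∀ l, ContinuousOn (h l) (Icc 0 m) := fun l =>
    (continuousOn_const.add hgcont).div hγ₁cont hγ₁ne
  have hsub : ∀ a b : ℝ, a ∈ Icc (0:ℝ) m → b ∈ Icc (0:ℝ) m → uIcc a b ⊆ Icc 0 m := by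
    intro a b ha hb
    rw [uIcc]
    exact Icc_subset_Icc (le_min ha.1 hb.1) (max_le ha.2 hb.2)
  have hhint : ∀ l, ∀ a b : ℝ, a ∈ Icc (0:ℝ) m → b ∈ Icc (0:ℝ) m →
      IntervalIntegrable (h l) volume a b := fun l a b ha hb =>
    ((hhcont l).mono (hsub a b ha hb)).intervalIntegrable
  set P : ℝ → ℝ → ℝ := fun l t => ∫ r in (0:ℝ)..t, h l r with hPdef
  have hPcont : ∀ l, ContinuousOn (P l) (Icc 0 m) := by
    intro l
    rw [← huIcc]
    exact continuousOn_primitive_interval (((hhcont l).mono (by rw [huIcc])).integrableOn_compact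
      (by rw [huIcc]; exact isCompact_Icc))
  have hPsub : ∀ l, ∀ y ∈ Icc (0:ℝ) m, ∀ s ∈ Icc (0:ℝ) m,
      (∫ r in y..s, h l r) = P l s - P l y := by
    intro l y hy s hs
    rw [← integral_interval_sub_left (hhint l 0 s (left_mem_Icc.2 hm0) hs)
      (hhint l 0 y (left_mem_Icc.2 hm0) hy)]
  -- bounds
  obtain ⟨xΓ, hxΓ, hΓmax⟩ := isCompact_Icc.exists_isMaxOn (α := ℝ) (β := ℝ)
    (nonempty_Icc.2 hm0) hγ₁cont
  set Γ := γ₁ xΓ with hΓdef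
  have hΓpos : 0 < Γ := hγ₁pos xΓ hxΓ
  have hΓ : ∀ r ∈ Icc (0:ℝ) m, γ₁ r ≤ Γ := fun r hr => hΓmax hr
  obtain ⟨xB, hxB, hBmax⟩ := isCompact_Icc.exists_isMaxOn (α := ℝ) (β := ℝ)
    (nonempty_Icc.2 hm0) hgcont.abs
  set B := |g xB| with hBdef
  have hB : ∀ r ∈ Icc (0:ℝ) m, |g r| ≤ B := fun r hr => hBmax hr
  have hB0 : 0 ≤ B := abs_nonneg _
  set f : ℝ → ℝ := fun y => β₁ y / γ₁ y with hfdef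
  have hfcont : ContinuousOn f (Icc 0 m) := hβ₁.div hγ₁cont hγ₁ne
  have hfnn : ∀ y ∈ Icc (0:ℝ) m, 0 ≤ f y := fun y hy =>
    div_nonneg (hβ₁nn y hy) (hγ₁pos y hy).le
  obtain ⟨xM, hxM, hMmax⟩ := isCompact_Icc.exists_isMaxOn (α := ℝ) (β := ℝ)
    (nonempty_Icc.2 hm0) hfcont
  set M₁ := f xM with hM₁def
  have hM₁ : ∀ y ∈ Icc (0:ℝ) m, f y ≤ M₁ := fun y hy => hMmax hy
  have hM₁0 : 0 ≤ M₁ := hfnn xM hxM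
  obtain ⟨xN, hxN, hNmax⟩ := isCompact_Icc.exists_isMaxOn (α := ℝ) (β := ℝ)
    (nonempty_Icc.2 hm0) hβ₂
  set M₂ := β₂ xN with hM₂def
  have hM₂ : ∀ s ∈ Icc (0:ℝ) m, β₂ s ≤ M₂ := fun s hs => hNmax hs
  have hM₂0 : 0 ≤ M₂ := hβ₂nn xN hxN
  -- Q and W
  set Q : ℝ → ℝ → ℝ := fun l s => ∫ y in (0:ℝ)..s, f y * Real.exp (P l y) with hQdef
  have hQintegrand : ∀ l, ContinuousOn (fun y => f y * Real.exp (P l y)) (Icc 0 m) :=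
    fun l => hfcont.mul (Real.continuous_exp.comp_continuousOn (hPcont l))
  have hQcont : ∀ l, ContinuousOn (Q l) (Icc 0 m) := by
    intro l
    rw [← huIcc]
    exact continuousOn_primitive_interval (((hQintegrand l).mono (by rw [huIcc])).integrableOn_compact
      (by rw [huIcc]; exact isCompact_Icc))
  have hQnn : ∀ l, ∀ s ∈ Icc (0:ℝ) m, 0 ≤ Q l s := by
    intro l s hs
    apply intervalIntegral.integral_nonneg hs.1
    intro y hy
    exact mul_nonneg (hfnn y ⟨hy.1, hy.2.trans hs.2⟩) (Real.exp_pos _).le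
  set W : ℝ → ℝ → ℝ := fun l s => β₂ s * (Real.exp (-P l s) * Q l s) with hWdef
  have hWcont : ∀ l, ContinuousOn (W l) (Icc 0 m) := fun l =>
    hβ₂.mul ((Real.continuous_exp.comp_continuousOn (hPcont l).neg).mul (hQcont l))
  have hWnn : ∀ l, ∀ s ∈ Icc (0:ℝ) m, 0 ≤ W l s := fun l s hs =>
    mul_nonneg (hβ₂nn s hs) (mul_nonneg (Real.exp_pos _).le (hQnn l s hs))
  have hWint : ∀ l, IntervalIntegrable (W l) volume 0 m :=
    fun l => ((hWcont l).mono (by rw [huIcc])).intervalIntegrable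
  -- pull-out identity
  have hpull : ∀ l s, (∫ y in (0:ℝ)..s, f y * Real.exp (P l y - P l s))
      = Real.exp (-P l s) * Q l s := by
    intro l s
    rw [hQdef, ← intervalIntegral.integral_const_mul]
    congr 1
    funext y
    rw [Real.exp_sub, Real.exp_neg]
    field_simp
  -- K in terms of W
  have hKW : ∀ l, K l = ∫ s in (0:ℝ)..m, W l s := by
    intro l
    rw [hK l]
    apply intervalIntegral.integral_congr
    intro s hs
    rw [huIcc] at hs
    have hinner : (∫ y in (0:ℝ)..s, (β₁ y / γ₁ y) *
        Real.exp (-∫ r in y..s, (l + μ r + c₁ r + γ₁d r) / γ₁ r))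
        = ∫ y in (0:ℝ)..s, f y * Real.exp (P l y - P l s) := by
      apply intervalIntegral.integral_congr
      intro y hy
      rw [uIcc_of_le hs.1] at hy
      have hyIcc : y ∈ Icc (0:ℝ) m := ⟨hy.1, hy.2.trans hs.2⟩
      show β₁ y / γ₁ y * Real.exp (-∫ r in y..s, (l + μ r + c₁ r + γ₁d r) / γ₁ r)
          = f y * Real.exp (P l y - P l s)
      have : (∫ r in y..s, (l + μ r + c₁ r + γ₁d r) / γ₁ r) = ∫ r in y..s, h l r := by
        apply intervalIntegral.integral_congr
        intro r hr
        show (l + μ r + c₁ r + γ₁d r) / γ₁ r = h l r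
        simp only [hhdef, hgdef]
        ring_nf
      rw [this, hPsub l y hyIcc s hs, neg_sub]
    simp only [hWdef]
    rw [hinner, hpull]
  -- exponent bounds
  have hElb : ∀ l, B ≤ l → ∀ y ∈ Icc (0:ℝ) m, ∀ s ∈ Icc (0:ℝ) m, y ≤ s →
      (l - B) / Γ * (s - y) ≤ P l s - P l y := by
    intro l hl y hy s hs hys
    rw [← hPsub l y hy s hs]
    have : ((l - B) / Γ) * (s - y) = ∫ _r in y..s, (l - B) / Γ := by
      rw [intervalIntegral.integral_const, smul_eq_mul]; ring
    rw [this]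
    apply intervalIntegral.integral_mono_on hys
      (intervalIntegrable_const) (hhint l y s hy hs)
    intro r hr
    have hrIcc : r ∈ Icc (0:ℝ) m := (Icc_subset_Icc hy.1 hs.2) hr
    have h1 : 0 < γ₁ r := hγ₁pos r hrIcc
    have h2 : γ₁ r ≤ Γ := hΓ r hrIcc
    have h3 : -B ≤ g r := (abs_le.1 (hB r hrIcc)).1
    rw [hhdef]
    rw [div_le_div_iff₀ hΓpos h1]
    nlinarith [sub_nonneg.2 hl]
  have hEub : ∀ l, l ≤ -B → ∀ y ∈ Icc (0:ℝ) m, ∀ s ∈ Icc (0:ℝ) m, y ≤ s →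
      P l s - P l y ≤ (l + B) / Γ * (s - y) := by
    intro l hl y hy s hs hys
    rw [← hPsub l y hy s hs]
    have : ((l + B) / Γ) * (s - y) = ∫ _r in y..s, (l + B) / Γ := by
      rw [intervalIntegral.integral_const, smul_eq_mul]; ring
    rw [this]
    apply intervalIntegral.integral_mono_on hys (hhint l y s hy hs)
      (intervalIntegrable_const)
    intro r hr
    have hrIcc : r ∈ Icc (0:ℝ) m := (Icc_subset_Icc hy.1 hs.2) hr
    have h1 : 0 < γ₁ r := hγ₁pos r hrIcc
    have h2 : γ₁ r ≤ Γ := hΓ r hrIcc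
    have h3 : g r ≤ B := (abs_le.1 (hB r hrIcc)).2
    rw [hhdef]
    rw [div_le_div_iff₀ h1 hΓpos]
    nlinarith [(by linarith : l + B ≤ 0)]
  constructor
  · -- atTop
    apply squeeze_zero_norm' (a := fun l => M₂ * (M₁ * Γ) * m / (l - B))
    · filter_upwards [Filter.eventually_ge_atTop (B + 1)] with l hl
      have hlB : (0:ℝ) < l - B := by linarith
      set a := (l - B) / Γ with hadef
      have ha : 0 < a := div_pos hlB hΓpos
      have hQb : ∀ s ∈ Icc (0:ℝ) m, Q l s ≤ M₁ * Real.exp (P l s) * (Γ / (l - B)) := by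
        intro s hs
        have hce : Continuous fun y : ℝ => Real.exp (a * (y - s)) :=
          Real.continuous_exp.comp (continuous_const.mul (continuous_id.sub continuous_const))
        have hexpint : ∀ c : ℝ, IntervalIntegrable (fun y => c * Real.exp (a * (y - s)))
            volume 0 s := fun c => (continuous_const.mul hce).intervalIntegrable 0 s
        have step1 : Q l s ≤ ∫ y in (0:ℝ)..s,
            (M₁ * Real.exp (P l s)) * Real.exp (a * (y - s)) := by
          apply intervalIntegral.integral_mono_on hs.1
            (((hQintegrand l).mono (hsub 0 s (left_mem_Icc.2 hm0) hs)).intervalIntegrable)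
            (hexpint _)
          intro y hy
          have hyIcc : y ∈ Icc (0:ℝ) m := ⟨hy.1, hy.2.trans hs.2⟩
          have hE := hElb l (by linarith) y hyIcc s hs hy.2
          have h1 : Real.exp (P l y) ≤ Real.exp (P l s) * Real.exp (a * (y - s)) := by
            rw [← Real.exp_add]
            apply Real.exp_le_exp.2
            nlinarith [hE]
          calc f y * Real.exp (P l y)
              ≤ M₁ * (Real.exp (P l s) * Real.exp (a * (y - s))) :=
                mul_le_mul (hM₁ y hyIcc) h1 (Real.exp_pos _).le hM₁0
            _ = (M₁ * Real.exp (P l s)) * Real.exp (a * (y - s)) := by ring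
        have hderiv : ∀ y : ℝ, HasDerivAt (fun y => Real.exp (a * (y - s)) / a)
            (Real.exp (a * (y - s))) y := by
          intro y
          have h0 : HasDerivAt (fun y : ℝ => a * (y - s)) a y := by
            simpa using ((hasDerivAt_id y).sub_const s).const_mul a
          have := h0.exp.div_const a
          simpa [mul_div_cancel_right₀ _ ha.ne'] using this
        have hint3 : (∫ y in (0:ℝ)..s, Real.exp (a * (y - s)))
            = Real.exp (a * (s - s)) / a - Real.exp (a * (0 - s)) / a := by
          apply intervalIntegral.integral_eq_sub_of_hasDerivAt (fun y _ => hderiv y)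
          exact hce.intervalIntegrable 0 s
        have hint4 : (∫ y in (0:ℝ)..s, Real.exp (a * (y - s))) ≤ 1 / a := by
          rw [hint3]
          have := (Real.exp_pos (a * (0 - s))).le
          have h5 : Real.exp (a * (s - s)) = 1 := by norm_num
          rw [h5]
          have : 0 ≤ Real.exp (a * (0 - s)) / a := div_nonneg (Real.exp_pos _).le ha.le
          linarith
        calc Q l s ≤ ∫ y in (0:ℝ)..s, (M₁ * Real.exp (P l s)) * Real.exp (a * (y - s)) := step1
          _ = (M₁ * Real.exp (P l s)) * ∫ y in (0:ℝ)..s, Real.exp (a * (y - s)) :=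
              intervalIntegral.integral_const_mul _ _
          _ ≤ (M₁ * Real.exp (P l s)) * (1 / a) := by
              apply mul_le_mul_of_nonneg_left hint4
              positivity
          _ = M₁ * Real.exp (P l s) * (Γ / (l - B)) := by rw [hadef, one_div_div]
      have hWb : ∀ s ∈ Icc (0:ℝ) m, W l s ≤ M₂ * (M₁ * Γ) / (l - B) := by
        intro s hs
        have h4 : Real.exp (-P l s) * Q l s ≤ M₁ * (Γ / (l - B)) := by
          calc Real.exp (-P l s) * Q l s
              ≤ Real.exp (-P l s) * (M₁ * Real.exp (P l s) * (Γ / (l - B))) :=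
                mul_le_mul_of_nonneg_left (hQb s hs) (Real.exp_pos _).le
            _ = M₁ * (Γ / (l - B)) * (Real.exp (-P l s) * Real.exp (P l s)) := by ring
            _ = M₁ * (Γ / (l - B)) := by rw [← Real.exp_add]; simp
        calc W l s = β₂ s * (Real.exp (-P l s) * Q l s) := rfl
          _ ≤ M₂ * (M₁ * (Γ / (l - B))) := by
              apply mul_le_mul (hM₂ s hs) h4 _ hM₂0
              exact mul_nonneg (Real.exp_pos _).le (hQnn l s hs)
          _ = M₂ * (M₁ * Γ) / (l - B) := by ring
      rw [hKW l]
      have hnorm : ‖∫ s in (0:ℝ)..m, W l s‖ ≤ (M₂ * (M₁ * Γ) / (l - B)) * |m - 0| := by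
        apply intervalIntegral.norm_integral_le_of_norm_le_const
        intro x hx
        rw [uIoc_of_le hm0] at hx
        have hxIcc : x ∈ Icc (0:ℝ) m := Ioc_subset_Icc_self hx
        rw [Real.norm_eq_abs, abs_of_nonneg (hWnn l x hxIcc)]
        exact hWb x hxIcc
      calc ‖∫ s in (0:ℝ)..m, W l s‖ ≤ (M₂ * (M₁ * Γ) / (l - B)) * |m - 0| := hnorm
        _ = M₂ * (M₁ * Γ) * m / (l - B) := by
            rw [abs_of_nonneg (by linarith : (0:ℝ) ≤ m - 0)]; ring
    · apply Filter.Tendsto.div_atTop (tendsto_const_nhds)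
      simpa [sub_eq_add_neg] using Filter.tendsto_atTop_add_const_right Filter.atTop (-B)
        Filter.tendsto_id
  · -- atBot
    have hy₀Icc : y₀ ∈ Icc (0:ℝ) m := ⟨hy₀, hy₀s₀.le.trans hs₀⟩
    have hs₀Icc : s₀ ∈ Icc (0:ℝ) m := ⟨hy₀.trans hy₀s₀.le, hs₀⟩
    obtain ⟨δ₁, hδ₁pos, hδ₁⟩ := Metric.continuousWithinAt_iff.1
      (hβ₁.continuousWithinAt hy₀Icc) (β₁ y₀ / 2) (by positivity)
    obtain ⟨δ₂, hδ₂pos, hδ₂⟩ := Metric.continuousWithinAt_iff.1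
      (hβ₂.continuousWithinAt hs₀Icc) (β₂ s₀ / 2) (by positivity)
    obtain ⟨y₁, s₁, hy₀y₁, hs₁s₀, hy₁δ, hs₁δ, hy₁s₁⟩ :
        ∃ y₁ s₁ : ℝ, y₀ < y₁ ∧ s₁ < s₀ ∧ y₁ - y₀ < δ₁ ∧ s₀ - s₁ < δ₂ ∧
          y₁ + (s₀ - y₀) / 3 ≤ s₁ := by
      have h1 := min_le_left (δ₁ / 2) ((s₀ - y₀) / 3)
      have h2 := min_le_right (δ₁ / 2) ((s₀ - y₀) / 3)
      have h3 := min_le_left (δ₂ / 2) ((s₀ - y₀) / 3)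
      have h4 := min_le_right (δ₂ / 2) ((s₀ - y₀) / 3)
      have h5 : 0 < min (δ₁ / 2) ((s₀ - y₀) / 3) := lt_min (by linarith) (by linarith)
      have h6 : 0 < min (δ₂ / 2) ((s₀ - y₀) / 3) := lt_min (by linarith) (by linarith)
      exact ⟨y₀ + min (δ₁ / 2) ((s₀ - y₀) / 3), s₀ - min (δ₂ / 2) ((s₀ - y₀) / 3),
        by linarith, by linarith, by linarith, by linarith, by linarith⟩
    have hgap : 0 < (s₀ - y₀) / 3 := by linarith
    have hy₁lt : y₁ < s₁ := by linarith
    have hy₁Icc : y₁ ∈ Icc (0:ℝ) m := ⟨by linarith, by linarith⟩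
    have hs₁Icc : s₁ ∈ Icc (0:ℝ) m := ⟨by linarith, by linarith⟩
    have hβ₁lb : ∀ y ∈ Icc y₀ y₁, β₁ y₀ / 2 ≤ β₁ y := by
      intro y hy
      have hyIcc : y ∈ Icc (0:ℝ) m := ⟨by linarith [hy.1], by linarith [hy.2, hy₁Icc.2]⟩
      have hdist : dist y y₀ < δ₁ := by
        rw [Real.dist_eq, abs_of_nonneg (by linarith [hy.1])]
        linarith [hy.2]
      have := hδ₁ hyIcc hdist
      rw [Real.dist_eq] at this
      have := abs_lt.1 this
      linarith [this.1]
    have hβ₂lb : ∀ s ∈ Icc s₁ s₀, β₂ s₀ / 2 ≤ β₂ s := by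
      intro s hs
      have hsIcc : s ∈ Icc (0:ℝ) m := ⟨by linarith [hs.1, hs₁Icc.1], by linarith [hs.2]⟩
      have hdist : dist s s₀ < δ₂ := by
        rw [Real.dist_eq, abs_of_nonpos (by linarith [hs.2])]
        linarith [hs.1]
      have := hδ₂ hsIcc hdist
      rw [Real.dist_eq] at this
      have := abs_lt.1 this
      linarith [this.1]
    set c₀ : ℝ := (s₀ - s₁) * ((β₂ s₀ / 2) * ((y₁ - y₀) * (β₁ y₀ / 2 / Γ))) with hc₀def
    have hc₀pos : 0 < c₀ := by
      apply mul_pos (by linarith)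
      apply mul_pos (by linarith)
      apply mul_pos (by linarith)
      positivity
    have hKlb : ∀ l : ℝ, l ≤ -B →
        c₀ * Real.exp (-((l + B) / Γ * (s₁ - y₁))) ≤ K l := by
      intro l hl
      set c₁' : ℝ := β₁ y₀ / 2 / Γ * Real.exp (-((l + B) / Γ * (s₁ - y₁))) with hc₁'def
      have hc₁'pos : 0 < c₁' := by positivity
      have hinnerlb : ∀ s ∈ Icc s₁ s₀, (y₁ - y₀) * c₁' ≤ Real.exp (-P l s) * Q l s := by
        intro s hs
        have hsIcc : s ∈ Icc (0:ℝ) m := ⟨by linarith [hs.1, hs₁Icc.1], by linarith [hs.2]⟩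
        rw [← hpull l s]
        have hintegrandcont : ContinuousOn (fun y => f y * Real.exp (P l y - P l s))
            (Icc 0 m) :=
          hfcont.mul (Real.continuous_exp.comp_continuousOn ((hPcont l).sub continuousOn_const))
        have hint0s : IntervalIntegrable (fun y => f y * Real.exp (P l y - P l s)) volume 0 s :=
          (hintegrandcont.mono (hsub 0 s (left_mem_Icc.2 hm0) hsIcc)).intervalIntegrable
        have hstep1 : (∫ y in y₀..y₁, f y * Real.exp (P l y - P l s))
            ≤ ∫ y in (0:ℝ)..s, f y * Real.exp (P l y - P l s) := by
          apply intervalIntegral.integral_mono_interval hy₀ hy₀y₁.le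
            (by linarith [hs.1, hgap])
          · apply MeasureTheory.ae_restrict_of_forall_mem measurableSet_Ioc
            intro y hy
            have hyIcc : y ∈ Icc (0:ℝ) m := ⟨hy.1.le, hy.2.trans hsIcc.2⟩
            exact mul_nonneg (hfnn y hyIcc) (Real.exp_pos _).le
          · exact hint0s
        have hstep2 : (y₁ - y₀) * c₁' ≤ ∫ y in y₀..y₁, f y * Real.exp (P l y - P l s) := by
          have : (y₁ - y₀) * c₁' = ∫ _y in y₀..y₁, c₁' := by
            rw [intervalIntegral.integral_const, smul_eq_mul]
          rw [this]
          apply intervalIntegral.integral_mono_on hy₀y₁.le intervalIntegrable_const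
            ((hintegrandcont.mono (hsub y₀ y₁ hy₀Icc hy₁Icc)).intervalIntegrable)
          intro y hy
          have hyIcc : y ∈ Icc (0:ℝ) m := ⟨by linarith [hy.1], by linarith [hy.2, hy₁Icc.2]⟩
          have hf1 : β₁ y₀ / 2 / Γ ≤ f y := by
            have h1 : β₁ y₀ / 2 ≤ β₁ y := hβ₁lb y hy
            have h2 : γ₁ y ≤ Γ := hΓ y hyIcc
            have h3 : 0 < γ₁ y := hγ₁pos y hyIcc
            rw [hfdef]
            rw [div_le_div_iff₀ hΓpos h3]
            nlinarith
          have hE : P l s - P l y ≤ (l + B) / Γ * (s₁ - y₁) := by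
            have hys : y ≤ s := by linarith [hy.2, hs.1, hgap]
            have h1 := hEub l hl y hyIcc s hsIcc hys
            have h2 : (l + B) / Γ * (s - y) ≤ (l + B) / Γ * (s₁ - y₁) := by
              apply mul_le_mul_of_nonpos_left (by linarith [hy.2, hs.1])
                (div_nonpos_of_nonpos_of_nonneg (by linarith) hΓpos.le)
            linarith
          have hexp : Real.exp (-((l + B) / Γ * (s₁ - y₁))) ≤ Real.exp (P l y - P l s) := by
            apply Real.exp_le_exp.2
            linarith
          calc c₁' = β₁ y₀ / 2 / Γ * Real.exp (-((l + B) / Γ * (s₁ - y₁))) := rfl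
            _ ≤ f y * Real.exp (P l y - P l s) := by
                apply mul_le_mul hf1 hexp (Real.exp_pos _).le
                exact le_trans (by positivity) hf1
        linarith
      have houterlb : (s₀ - s₁) * ((β₂ s₀ / 2) * ((y₁ - y₀) * c₁')) ≤
          ∫ s in s₁..s₀, W l s := by
        have : (s₀ - s₁) * ((β₂ s₀ / 2) * ((y₁ - y₀) * c₁')) =
            ∫ _s in s₁..s₀, (β₂ s₀ / 2) * ((y₁ - y₀) * c₁') := by
          rw [intervalIntegral.integral_const, smul_eq_mul]
        rw [this]
        apply intervalIntegral.integral_mono_on hs₁s₀.le intervalIntegrable_const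
          (((hWcont l).mono (hsub s₁ s₀ hs₁Icc hs₀Icc)).intervalIntegrable)
        intro s hs
        have hsIcc : s ∈ Icc (0:ℝ) m := ⟨by linarith [hs.1, hs₁Icc.1], by linarith [hs.2]⟩
        calc (β₂ s₀ / 2) * ((y₁ - y₀) * c₁')
            ≤ β₂ s * (Real.exp (-P l s) * Q l s) := by
              have h1 := hβ₂lb s hs
              have h2 := hinnerlb s hs
              have h3 : 0 ≤ (y₁ - y₀) * c₁' :=
                mul_nonneg (by linarith) hc₁'pos.le
              nlinarith [hβ₂nn s hsIcc]
          _ = W l s := rfl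
      have hmono : (∫ s in s₁..s₀, W l s) ≤ ∫ s in (0:ℝ)..m, W l s := by
        apply intervalIntegral.integral_mono_interval hs₁Icc.1 hs₁s₀.le hs₀ _ (hWint l)
        apply MeasureTheory.ae_restrict_of_forall_mem measurableSet_Ioc
        intro s hs
        exact hWnn l s ⟨hs.1.le, hs.2⟩
      rw [hKW l]
      calc c₀ * Real.exp (-((l + B) / Γ * (s₁ - y₁)))
          = (s₀ - s₁) * ((β₂ s₀ / 2) * ((y₁ - y₀) * c₁')) := by
            rw [hc₁'def, hc₀def]; ring
        _ ≤ ∫ s in s₁..s₀, W l s := houterlb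
        _ ≤ ∫ s in (0:ℝ)..m, W l s := hmono
    apply Filter.tendsto_atTop_mono' Filter.atBot
      (f₁ := fun l => c₀ * Real.exp (-((l + B) / Γ * (s₁ - y₁))))
    · filter_upwards [Filter.eventually_le_atBot (-B)] with l hl
      exact hKlb l hl
    · apply Filter.Tendsto.const_mul_atTop hc₀pos
      apply Real.tendsto_exp_atTop.comp
      have h1 : Filter.Tendsto (fun l : ℝ => l + B) Filter.atBot Filter.atBot :=
        Filter.tendsto_atBot_add_const_right Filter.atBot B Filter.tendsto_id
      have h2 : Filter.Tendsto (fun l : ℝ => (l + B) / Γ) Filter.atBot Filter.atBot :=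
        h1.atBot_div_const hΓpos
      have h3 : Filter.Tendsto (fun l : ℝ => (l + B) / Γ * (s₁ - y₁)) Filter.atBot
          Filter.atBot :=
        h2.atBot_mul_const (by linarith [hy₁lt] : (0:ℝ) < s₁ - y₁)
      exact Filter.tendsto_neg_atBot_atTop.comp h3
end

section
/- There exists a unique real number λ* such that K(λ*) = 1 (the characteristic equation K(λ) = 1 admits a unique real solution). -/
open MeasureTheory Set intervalIntegral

set_option maxHeartbeats 1000000

lemma aux_eu (m Γ γmin G B₁ B₂ y₀ s₀ : ℝ) (hm : 0 < m)
    (γ g β₁ β₂ : ℝ → ℝ)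
    (hγ : Continuous γ) (hg : Continuous g) (hβ₁ : Continuous β₁) (hβ₂ : Continuous β₂)
    (hγminpos : 0 < γmin) (hγlb : ∀ r, γmin ≤ γ r) (hγub : ∀ r, γ r ≤ Γ)
    (hgb : ∀ r, |g r| ≤ G)
    (hβ₁nn : ∀ r, 0 ≤ β₁ r) (hβ₁ub : ∀ r, β₁ r ≤ B₁)
    (hβ₂nn : ∀ r, 0 ≤ β₂ r) (hβ₂ub : ∀ r, β₂ r ≤ B₂)
    (hy₀ : 0 ≤ y₀) (hy₀s₀ : y₀ < s₀) (hs₀ : s₀ ≤ m)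
    (hβ₁pos : 0 < β₁ y₀) (hβ₂pos : 0 < β₂ s₀) :
    ∃! l : ℝ, (∫ s in (0:ℝ)..m, β₂ s * ∫ y in (0:ℝ)..s, (β₁ y / γ y) *
        Real.exp (-∫ r in y..s, (l + g r) / γ r)) = 1 := by
  have hγpos : ∀ r, 0 < γ r := fun r => hγminpos.trans_le (hγlb r)
  have hγne : ∀ r, γ r ≠ 0 := fun r => (hγpos r).ne'
  have hΓpos : 0 < Γ := (hγpos 0).trans_le (hγub 0)
  have hGnn : 0 ≤ G := (abs_nonneg _).trans (hgb 0)
  have hinv : Continuous fun r => (γ r)⁻¹ := hγ.inv₀ hγne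
  have hgγ : Continuous fun r => g r / γ r := hg.div hγ hγne
  set T : ℝ → ℝ → ℝ := fun y s => ∫ r in y..s, (γ r)⁻¹ with hTdef
  set C : ℝ → ℝ → ℝ := fun y s => ∫ r in y..s, g r / γ r with hCdef
  have hsplit : ∀ (l y s : ℝ), (∫ r in y..s, (l + g r) / γ r) = l * T y s + C y s := by
    intro l y s
    have h1 : ∀ r ∈ uIcc y s, (fun r => (l + g r) / γ r) r
        = (fun r => l * (γ r)⁻¹ + g r / γ r) r := by
      intro r _
      field_simp
    rw [intervalIntegral.integral_congr h1,
      intervalIntegral.integral_add (f := fun r => l * (γ r)⁻¹) (g := fun r => g r / γ r) ((continuous_const.mul hinv).intervalIntegrable _ _)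
        (hgγ.intervalIntegrable _ _), intervalIntegral.integral_const_mul]
  -- joint continuity of T and C
  have hprimT : Continuous fun x => ∫ r in (0:ℝ)..x, (γ r)⁻¹ :=
    intervalIntegral.continuous_primitive (fun a b => hinv.intervalIntegrable a b) 0
  have hprimC : Continuous fun x => ∫ r in (0:ℝ)..x, g r / γ r :=
    intervalIntegral.continuous_primitive (fun a b => hgγ.intervalIntegrable a b) 0
  have hTsub : ∀ y s : ℝ, T y s = (∫ r in (0:ℝ)..s, (γ r)⁻¹) - ∫ r in (0:ℝ)..y, (γ r)⁻¹ := by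
    intro y s
    rw [intervalIntegral.integral_interval_sub_left (hinv.intervalIntegrable _ _)
      (hinv.intervalIntegrable _ _)]
  have hCsub : ∀ y s : ℝ, C y s = (∫ r in (0:ℝ)..s, g r / γ r) - ∫ r in (0:ℝ)..y, g r / γ r := by
    intro y s
    rw [intervalIntegral.integral_interval_sub_left (hgγ.intervalIntegrable _ _)
      (hgγ.intervalIntegrable _ _)]
  have hTc : Continuous fun p : ℝ × ℝ => T p.1 p.2 := by
    have h : (fun p : ℝ × ℝ => T p.1 p.2)
        = fun p => (∫ r in (0:ℝ)..p.2, (γ r)⁻¹) - ∫ r in (0:ℝ)..p.1, (γ r)⁻¹ :=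
      funext fun p => hTsub p.1 p.2
    rw [h]; exact (hprimT.comp continuous_snd).sub (hprimT.comp continuous_fst)
  have hCc : Continuous fun p : ℝ × ℝ => C p.1 p.2 := by
    have h : (fun p : ℝ × ℝ => C p.1 p.2)
        = fun p => (∫ r in (0:ℝ)..p.2, g r / γ r) - ∫ r in (0:ℝ)..p.1, g r / γ r :=
      funext fun p => hCsub p.1 p.2
    rw [h]; exact (hprimC.comp continuous_snd).sub (hprimC.comp continuous_fst)
  -- rewrite the statement in terms of T and C
  simp only [hsplit]
  set K : ℝ → ℝ := fun l => ∫ s in (0:ℝ)..m, β₂ s * ∫ y in (0:ℝ)..s,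
    (β₁ y / γ y) * Real.exp (-(l * T y s + C y s)) with hKdef
  show ∃! l : ℝ, K l = 1
  -- the inner integrand, jointly continuous
  set FE : (ℝ × ℝ) → ℝ → ℝ :=
    fun p y => (β₁ y / γ y) * Real.exp (-(p.1 * T y p.2 + C y p.2)) with hFEdef
  have hFEc : Continuous (Function.uncurry FE) := by
    apply Continuous.mul
    · exact (hβ₁.comp continuous_snd).div (hγ.comp continuous_snd) fun q => hγne _
    · exact Real.continuous_exp.comp
        (((continuous_fst.fst.mul
            (hTc.comp (continuous_snd.prodMk continuous_fst.snd))).add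
          (hCc.comp (continuous_snd.prodMk continuous_fst.snd))).neg)
  have hFy : ∀ l s : ℝ, Continuous fun y => FE (l, s) y :=
    fun l s => hFEc.comp (continuous_const.prodMk continuous_id)
  have hinnc : Continuous fun p : ℝ × ℝ => ∫ y in (0:ℝ)..p.2, FE p y :=
    intervalIntegral.continuous_parametric_intervalIntegral_of_continuous hFEc continuous_snd
  set inn : ℝ → ℝ → ℝ := fun l s => ∫ y in (0:ℝ)..s, FE (l, s) y with hinndef
  have hKinn : ∀ l : ℝ, K l = ∫ s in (0:ℝ)..m, β₂ s * inn l s := fun l => rfl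
  have hinncl : ∀ l : ℝ, Continuous fun s => inn l s := by
    intro l
    have h := Continuous.comp (g := fun p : ℝ × ℝ => ∫ y in (0:ℝ)..p.2, FE p y)
      (f := fun s : ℝ => ((l, s) : ℝ × ℝ)) hinnc (continuous_const.prodMk continuous_id)
    simpa [Function.comp_def] using h
  have hKc : Continuous K := by
    have h2 : Continuous (Function.uncurry fun (l s : ℝ) => β₂ s * inn l s) :=
      (hβ₂.comp continuous_snd).mul hinnc
    exact intervalIntegral.continuous_parametric_intervalIntegral_of_continuous' h2 0 m
  -- basic bounds on T and C
  have hTnn : ∀ y s : ℝ, y ≤ s → 0 ≤ T y s := fun y s h =>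
    intervalIntegral.integral_nonneg h fun r _ => (inv_nonneg).2 (hγpos r).le
  have hTlb : ∀ y s : ℝ, y ≤ s → (s - y) * Γ⁻¹ ≤ T y s := by
    intro y s h
    have h1 : (∫ r in y..s, Γ⁻¹) ≤ T y s := by
      apply intervalIntegral.integral_mono_on h (intervalIntegrable_const)
        (hinv.intervalIntegrable _ _)
      intro r _
      exact inv_anti₀ (hγpos r) (hγub r)
    simpa using h1
  have hTub : ∀ y s : ℝ, y ≤ s → T y s ≤ (s - y) * γmin⁻¹ := by
    intro y s h
    have h1 : T y s ≤ ∫ r in y..s, γmin⁻¹ := by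
      apply intervalIntegral.integral_mono_on h (hinv.intervalIntegrable _ _)
        (intervalIntegrable_const)
      intro r _
      exact inv_anti₀ hγminpos (hγlb r)
    simpa using h1
  have hCb : ∀ y s : ℝ, y ≤ s → |C y s| ≤ (s - y) * (G * γmin⁻¹) := by
    intro y s h
    have h1 : |C y s| ≤ ∫ r in y..s, |g r / γ r| :=
      intervalIntegral.abs_integral_le_integral_abs h
    have h2 : (∫ r in y..s, |g r / γ r|) ≤ ∫ r in y..s, G * γmin⁻¹ := by
      apply intervalIntegral.integral_mono_on h (hgγ.abs.intervalIntegrable _ _)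
        (intervalIntegrable_const)
      intro r _
      rw [abs_div, abs_of_pos (hγpos r)]
      apply div_le_div₀ hGnn (hgb r) hγminpos (hγlb r) |>.trans
      rw [div_eq_mul_inv]
    calc |C y s| ≤ ∫ r in y..s, G * γmin⁻¹ := h1.trans h2
    _ = (s - y) * (G * γmin⁻¹) := by simp [smul_eq_mul]; ring
  -- nonnegativity of inner integral
  have hFEnn : ∀ (p : ℝ × ℝ) (y : ℝ), 0 ≤ FE p y := fun p y =>
    mul_nonneg (div_nonneg (hβ₁nn y) (hγpos y).le) (Real.exp_pos _).le
  have hinn_nn : ∀ l s : ℝ, 0 ≤ s → 0 ≤ inn l s := fun l s hs =>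
    intervalIntegral.integral_nonneg hs fun y _ => hFEnn _ y
  -- strict antitonicity
  have hinn_mono : ∀ l₁ l₂ s : ℝ, l₁ ≤ l₂ → 0 ≤ s → inn l₂ s ≤ inn l₁ s := by
    intro l₁ l₂ s h hs
    apply intervalIntegral.integral_mono_on hs ((hFy l₂ s).intervalIntegrable _ _)
      ((hFy l₁ s).intervalIntegrable _ _)
    intro y hy
    apply mul_le_mul_of_nonneg_left _ (div_nonneg (hβ₁nn y) (hγpos y).le)
    apply Real.exp_le_exp.2
    have hT0 := hTnn y s hy.2
    nlinarith
  have hinn_strict : ∀ l₁ l₂ : ℝ, l₁ < l₂ → inn l₂ s₀ < inn l₁ s₀ := by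
    intro l₁ l₂ h
    have hs₀pos : (0:ℝ) < s₀ := hy₀.trans_lt hy₀s₀
    apply intervalIntegral.integral_lt_integral_of_continuousOn_of_le_of_exists_lt hs₀pos
      (hFy l₂ s₀).continuousOn (hFy l₁ s₀).continuousOn
    · intro y hy
      apply mul_le_mul_of_nonneg_left _ (div_nonneg (hβ₁nn y) (hγpos y).le)
      apply Real.exp_le_exp.2
      have hT0 := hTnn y s₀ hy.2
      nlinarith
    · refine ⟨y₀, ⟨hy₀, hy₀s₀.le⟩, ?_⟩
      apply mul_lt_mul_of_pos_left _ (div_pos hβ₁pos (hγpos y₀))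
      apply Real.exp_lt_exp.2
      have hTpos : 0 < T y₀ s₀ := by
        have := hTlb y₀ s₀ hy₀s₀.le
        have h2 : 0 < (s₀ - y₀) * Γ⁻¹ := mul_pos (by linarith) (inv_pos.2 hΓpos)
        linarith
      nlinarith
  have hKanti : StrictAnti K := by
    intro l₁ l₂ h
    show K l₂ < K l₁
    rw [hKinn l₁, hKinn l₂]
    apply intervalIntegral.integral_lt_integral_of_continuousOn_of_le_of_exists_lt hm
      (hβ₂.mul (hinncl l₂)).continuousOn (hβ₂.mul (hinncl l₁)).continuousOn
    · intro s hs
      exact mul_le_mul_of_nonneg_left (hinn_mono l₁ l₂ s h.le hs.1.le) (hβ₂nn s)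
    · exact ⟨s₀, ⟨hy₀.trans hy₀s₀.le, hs₀⟩,
        mul_lt_mul_of_pos_left (hinn_strict l₁ l₂ h) hβ₂pos⟩
  -- blow-up at -infinity
  set δ : ℝ := (s₀ - y₀) / 3 with hδdef
  have hδ : 0 < δ := by rw [hδdef]; linarith
  have h3δ : s₀ - y₀ = 3 * δ := by rw [hδdef]; ring
  have hCcl : ∀ s : ℝ, Continuous fun y : ℝ => C y s := by
    intro s
    have h := Continuous.comp (g := fun p : ℝ × ℝ => C p.1 p.2)
      (f := fun y : ℝ => ((y, s) : ℝ × ℝ)) hCc (continuous_id.prodMk continuous_const)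
    simpa [Function.comp_def] using h
  have hqcy : ∀ s : ℝ, Continuous fun y => (β₁ y / γ y) * Real.exp (-C y s) := fun s =>
    ((hβ₁.div hγ hγne).mul (Real.continuous_exp.comp (hCcl s).neg))
  set q : ℝ → ℝ := fun s => ∫ y in y₀..(y₀ + δ), (β₁ y / γ y) * Real.exp (-C y s) with hqdef
  have hq_eq : q = fun s => Real.exp (-(∫ r in (0:ℝ)..s, g r / γ r)) *
      ∫ y in y₀..(y₀ + δ), (β₁ y / γ y) * Real.exp (∫ r in (0:ℝ)..y, g r / γ r) := by
    funext s
    rw [hqdef]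
    simp only
    rw [← intervalIntegral.integral_const_mul]
    apply intervalIntegral.integral_congr
    intro y _
    simp only
    rw [hCsub y s]
    have hx : Real.exp (-((∫ r in (0:ℝ)..s, g r / γ r) - ∫ r in (0:ℝ)..y, g r / γ r))
        = Real.exp (-(∫ r in (0:ℝ)..s, g r / γ r)) *
          Real.exp (∫ r in (0:ℝ)..y, g r / γ r) := by
      rw [← Real.exp_add]; congr 1; ring
    rw [hx]; ring
  have hqc : Continuous q := by
    rw [hq_eq]
    exact (Real.continuous_exp.comp hprimC.neg).mul continuous_const
  have hq_nn : ∀ s : ℝ, 0 ≤ q s := fun s =>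
    intervalIntegral.integral_nonneg (by linarith) fun y _ =>
      mul_nonneg (div_nonneg (hβ₁nn y) (hγpos y).le) (Real.exp_pos _).le
  have hq_pos : 0 < q s₀ := by
    apply intervalIntegral.integral_pos (by linarith) (hqcy s₀).continuousOn
    · intro y _
      exact mul_nonneg (div_nonneg (hβ₁nn y) (hγpos y).le) (Real.exp_pos _).le
    · exact ⟨y₀, ⟨le_refl _, by linarith⟩,
        mul_pos (div_pos hβ₁pos (hγpos y₀)) (Real.exp_pos _)⟩
  set Q : ℝ := ∫ s in (s₀ - δ)..s₀, β₂ s * q s with hQdef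
  have hQpos : 0 < Q := by
    apply intervalIntegral.integral_pos (by linarith) (hβ₂.mul hqc).continuousOn
    · intro s _
      exact mul_nonneg (hβ₂nn s) (hq_nn s)
    · exact ⟨s₀, ⟨by linarith, le_refl _⟩, mul_pos hβ₂pos hq_pos⟩
  set T0 : ℝ := δ * Γ⁻¹ with hT0def
  have hT0pos : 0 < T0 := mul_pos hδ (inv_pos.2 hΓpos)
  have hlow : ∀ l : ℝ, l ≤ 0 → Q * Real.exp (-(l * T0)) ≤ K l := by
    intro l hl
    have hstep1 : ∀ s : ℝ, s₀ - δ ≤ s → s ≤ s₀ → Real.exp (-(l * T0)) * q s ≤ inn l s := by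
      intro s hs1 hs2
      have hys : y₀ + δ ≤ s := by linarith
      have h1 : Real.exp (-(l * T0)) * q s
          = ∫ y in y₀..(y₀ + δ), Real.exp (-(l * T0)) * ((β₁ y / γ y) * Real.exp (-C y s)) :=
        (intervalIntegral.integral_const_mul _ _).symm
      rw [h1]
      have hstep : (∫ y in y₀..(y₀ + δ), Real.exp (-(l * T0)) * ((β₁ y / γ y) * Real.exp (-C y s)))
          ≤ ∫ y in y₀..(y₀ + δ), FE (l, s) y := by
        apply intervalIntegral.integral_mono_on (by linarith)
          ((continuous_const.mul (hqcy s)).intervalIntegrable _ _)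
          ((hFy l s).intervalIntegrable _ _)
        intro y hy
        have hy1 : y₀ ≤ y := hy.1
        have hy2 : y ≤ y₀ + δ := hy.2
        have hTge : T0 ≤ T y s := by
          have h2 := hTlb y s (by linarith)
          have h3 : δ ≤ s - y := by linarith
          have h4 : δ * Γ⁻¹ ≤ (s - y) * Γ⁻¹ :=
            mul_le_mul_of_nonneg_right h3 (inv_pos.2 hΓpos).le
          rw [hT0def]; linarith
        have hlT : l * T y s ≤ l * T0 := mul_le_mul_of_nonpos_left hTge hl
        have hkey : -(l * T0) + -(C y s) ≤ -(l * T y s + C y s) := by linarith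
        calc Real.exp (-(l * T0)) * ((β₁ y / γ y) * Real.exp (-C y s))
            = (β₁ y / γ y) * Real.exp (-(l * T0) + -(C y s)) := by
              rw [Real.exp_add]; ring
          _ ≤ (β₁ y / γ y) * Real.exp (-(l * T y s + C y s)) :=
              mul_le_mul_of_nonneg_left (Real.exp_le_exp.2 hkey)
                (div_nonneg (hβ₁nn y) (hγpos y).le)
          _ = FE (l, s) y := rfl
      refine hstep.trans ?_
      have : (∫ y in y₀..(y₀ + δ), FE (l, s) y) ≤ ∫ y in (0:ℝ)..s, FE (l, s) y := by
        apply intervalIntegral.integral_mono_interval hy₀ (by linarith) hys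
          (Filter.Eventually.of_forall fun y => hFEnn (l, s) y)
          ((hFy l s).intervalIntegrable _ _)
      exact this
    have h2 : Q * Real.exp (-(l * T0))
        = ∫ s in (s₀ - δ)..s₀, Real.exp (-(l * T0)) * (β₂ s * q s) := by
      rw [intervalIntegral.integral_const_mul, hQdef]; ring
    rw [h2, hKinn l]
    have hstep2 : (∫ s in (s₀ - δ)..s₀, Real.exp (-(l * T0)) * (β₂ s * q s))
        ≤ ∫ s in (s₀ - δ)..s₀, β₂ s * inn l s := by
      apply intervalIntegral.integral_mono_on (by linarith)
        ((continuous_const.mul (hβ₂.mul hqc)).intervalIntegrable _ _)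
        ((hβ₂.mul (hinncl l)).intervalIntegrable _ _)
      intro s hs
      calc Real.exp (-(l * T0)) * (β₂ s * q s)
          = β₂ s * (Real.exp (-(l * T0)) * q s) := by ring
        _ ≤ β₂ s * inn l s :=
            mul_le_mul_of_nonneg_left (hstep1 s hs.1 hs.2) (hβ₂nn s)
    refine hstep2.trans ?_
    apply intervalIntegral.integral_mono_interval (by linarith) (by linarith) hs₀
    · rw [Filter.EventuallyLE, ae_restrict_iff' measurableSet_Ioc]
      exact Filter.Eventually.of_forall fun s hs =>
        mul_nonneg (hβ₂nn s) (hinn_nn l s hs.1.le)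
    · exact (hβ₂.mul (hinncl l)).intervalIntegrable _ _
  have ha : ∃ a : ℝ, 1 ≤ K a := by
    set a : ℝ := min 0 (Real.log Q / T0) with hadef
    refine ⟨a, ?_⟩
    have hle := hlow a (min_le_left _ _)
    refine le_trans ?_ hle
    have h1 : a * T0 ≤ Real.log Q := by
      calc a * T0 ≤ (Real.log Q / T0) * T0 :=
            mul_le_mul_of_nonneg_right (min_le_right _ _) hT0pos.le
        _ = Real.log Q := by field_simp
    have h3 : Q⁻¹ ≤ Real.exp (-(a * T0)) := by
      calc Q⁻¹ = Real.exp (Real.log Q⁻¹) := (Real.exp_log (inv_pos.2 hQpos)).symm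
        _ ≤ Real.exp (-(a * T0)) := by
            apply Real.exp_le_exp.2
            rw [Real.log_inv]
            linarith
    calc (1:ℝ) = Q * Q⁻¹ := (mul_inv_cancel₀ hQpos.ne').symm
      _ ≤ Q * Real.exp (-(a * T0)) := mul_le_mul_of_nonneg_left h3 hQpos.le
  -- decay at +infinity
  have hB₁nn' : (0:ℝ) ≤ B₁ := (hβ₁nn 0).trans (hβ₁ub 0)
  have hB₂nn' : (0:ℝ) ≤ B₂ := (hβ₂nn 0).trans (hβ₂ub 0)
  set M : ℝ := m * (G * γmin⁻¹) with hMdef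
  have hMnn : 0 ≤ M := mul_nonneg hm.le (mul_nonneg hGnn (inv_pos.2 hγminpos).le)
  set A : ℝ := (B₁ * γmin⁻¹) * Real.exp M with hAdef
  have hAnn : 0 ≤ A :=
    mul_nonneg (mul_nonneg hB₁nn' (inv_pos.2 hγminpos).le) (Real.exp_pos _).le
  set D : ℝ := m * (B₂ * (A * Γ)) with hDdef
  set b : ℝ := max 1 D with hbdef
  have hb1 : (1:ℝ) ≤ b := le_max_left _ _
  have hbpos : (0:ℝ) < b := lt_of_lt_of_le one_pos hb1
  have hbD : D ≤ b := le_max_right _ _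
  have hb : K b ≤ 1 := by
    set c : ℝ := b * Γ⁻¹ with hcdef
    have hcpos : 0 < c := mul_pos hbpos (inv_pos.2 hΓpos)
    have hinnb : ∀ s ∈ Icc (0:ℝ) m, inn b s ≤ A * (Γ * b⁻¹) := by
      intro s hs
      have hcore : inn b s ≤ ∫ y in (0:ℝ)..s, A * Real.exp (-c * (s - y)) := by
        apply intervalIntegral.integral_mono_on hs.1 ((hFy b s).intervalIntegrable _ _)
          ((continuous_const.mul (Real.continuous_exp.comp
            ((continuous_const.mul (continuous_const.sub continuous_id)) :
              Continuous fun y : ℝ => -c * (s - y)))).intervalIntegrable _ _)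
        intro y hy
        have hfyb : β₁ y / γ y ≤ B₁ * γmin⁻¹ := by
          rw [← div_eq_mul_inv]
          exact div_le_div₀ hB₁nn' (hβ₁ub y) hγminpos (hγlb y)
        have hexp : Real.exp (-(b * T y s + C y s))
            ≤ Real.exp M * Real.exp (-c * (s - y)) := by
          rw [← Real.exp_add]
          apply Real.exp_le_exp.2
          have h1 := hTlb y s hy.2
          have habs := abs_le.1 (hCb y s hy.2)
          have hsy : s - y ≤ m := by
            have := hy.1; have := hs.2; linarith
          have hGg : 0 ≤ G * γmin⁻¹ := mul_nonneg hGnn (inv_pos.2 hγminpos).le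
          have hCge : -(C y s) ≤ M := by
            have h5 : (s - y) * (G * γmin⁻¹) ≤ m * (G * γmin⁻¹) :=
              mul_le_mul_of_nonneg_right hsy hGg
            rw [hMdef]; linarith
          have hbT : b * ((s - y) * Γ⁻¹) ≤ b * T y s :=
            mul_le_mul_of_nonneg_left h1 hbpos.le
          have hrw : -c * (s - y) = -(b * ((s - y) * Γ⁻¹)) := by rw [hcdef]; ring
          rw [hrw]
          linarith
        calc FE (b, s) y = (β₁ y / γ y) * Real.exp (-(b * T y s + C y s)) := rfl
          _ ≤ (B₁ * γmin⁻¹) * (Real.exp M * Real.exp (-c * (s - y))) :=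
              mul_le_mul hfyb hexp (Real.exp_pos _).le
                (mul_nonneg hB₁nn' (inv_pos.2 hγminpos).le)
          _ = A * Real.exp (-c * (s - y)) := by rw [hAdef]; ring
      have hint0 : (∫ y in (0:ℝ)..s, Real.exp (-c * (s - y)))
          = c⁻¹ * (1 - Real.exp (-(c * s))) := by
        have h1 : ∀ y ∈ uIcc (0:ℝ) s, (fun y => Real.exp (-c * (s - y))) y
            = (fun y => Real.exp (-(c * s)) * Real.exp (c * y)) y := by
          intro y _
          simp only
          rw [← Real.exp_add]
          congr 1; ring
        rw [intervalIntegral.integral_congr h1, intervalIntegral.integral_const_mul,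
          intervalIntegral.integral_comp_mul_left Real.exp hcpos.ne', integral_exp]
        have hx : Real.exp (-(c * s)) * Real.exp (c * s) = 1 := by
          rw [← Real.exp_add]; simp
        rw [mul_zero, Real.exp_zero, smul_eq_mul]
        linear_combination c⁻¹ * hx
      calc inn b s ≤ ∫ y in (0:ℝ)..s, A * Real.exp (-c * (s - y)) := hcore
        _ = A * (c⁻¹ * (1 - Real.exp (-(c * s)))) := by
            rw [intervalIntegral.integral_const_mul, hint0]
        _ ≤ A * c⁻¹ := by
            have h6 : 0 ≤ Real.exp (-(c * s)) := (Real.exp_pos _).le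
            have h7 : (0:ℝ) ≤ c⁻¹ := (inv_pos.2 hcpos).le
            nlinarith [mul_nonneg (mul_nonneg hAnn h7) h6]
        _ = A * (Γ * b⁻¹) := by
            rw [hcdef, mul_inv, inv_inv]; ring
      done
    rw [hKinn b]
    have hGb : (0:ℝ) ≤ A * (Γ * b⁻¹) :=
      mul_nonneg hAnn (mul_nonneg hΓpos.le (inv_pos.2 hbpos).le)
    have hstep : (∫ s in (0:ℝ)..m, β₂ s * inn b s)
        ≤ ∫ s in (0:ℝ)..m, B₂ * (A * (Γ * b⁻¹)) := by
      apply intervalIntegral.integral_mono_on hm.le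
        ((hβ₂.mul (hinncl b)).intervalIntegrable _ _) intervalIntegrable_const
      intro s hs
      calc β₂ s * inn b s ≤ β₂ s * (A * (Γ * b⁻¹)) :=
            mul_le_mul_of_nonneg_left (hinnb s hs) (hβ₂nn s)
        _ ≤ B₂ * (A * (Γ * b⁻¹)) := mul_le_mul_of_nonneg_right (hβ₂ub s) hGb
    refine hstep.trans ?_
    rw [intervalIntegral.integral_const, smul_eq_mul]
    have h8 : (m - 0) * (B₂ * (A * (Γ * b⁻¹))) = D * b⁻¹ := by rw [hDdef]; ring
    rw [h8]
    calc D * b⁻¹ ≤ b * b⁻¹ :=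
          mul_le_mul_of_nonneg_right hbD (inv_pos.2 hbpos).le
      _ = 1 := mul_inv_cancel₀ hbpos.ne'
  -- conclusion
  obtain ⟨a, haK⟩ := ha
  have hab : a ≤ b := by
    by_contra hcon
    push_neg at hcon
    have := hKanti hcon
    linarith
  obtain ⟨l, _, hKl⟩ := intermediate_value_Icc' hab hKc.continuousOn ⟨hb, haK⟩
  exact ⟨l, hKl, fun x hx => hKanti.injective (hx.trans hKl.symm)⟩

/-- The characteristic equation `K(λ) = 1` admits a unique real solution. -/
theorem stmt_12 (m : ℝ) (hm : 0 < m) (γ₁ γ₁d : ℝ → ℝ)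
    (hγ₁ : ∀ s ∈ Icc (0:ℝ) m, HasDerivWithinAt γ₁ (γ₁d s) (Icc 0 m) s)
    (hγ₁d : ContinuousOn γ₁d (Icc 0 m))
    (hγ₁pos : ∀ s ∈ Icc (0:ℝ) m, 0 < γ₁ s)
    (μ c₁ : ℝ → ℝ)
    (hμ : ContinuousOn μ (Icc 0 m)) (hμnn : ∀ s ∈ Icc (0:ℝ) m, 0 ≤ μ s)
    (hc₁ : ContinuousOn c₁ (Icc 0 m)) (hc₁nn : ∀ s ∈ Icc (0:ℝ) m, 0 ≤ c₁ s)
    (β₁ β₂ : ℝ → ℝ)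
    (hβ₁ : ContinuousOn β₁ (Icc 0 m)) (hβ₁nn : ∀ s ∈ Icc (0:ℝ) m, 0 ≤ β₁ s)
    (hβ₂ : ContinuousOn β₂ (Icc 0 m)) (hβ₂nn : ∀ s ∈ Icc (0:ℝ) m, 0 ≤ β₂ s)
    (y₀ s₀ : ℝ) (hy₀ : 0 ≤ y₀) (hy₀s₀ : y₀ < s₀) (hs₀ : s₀ ≤ m)
    (hβ₁pos : 0 < β₁ y₀) (hβ₂pos : 0 < β₂ s₀)
    (K : ℝ → ℝ)
    (hK : ∀ l : ℝ, K l = ∫ s in (0:ℝ)..m, β₂ s *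
        ∫ y in (0:ℝ)..s, (β₁ y / γ₁ y) *
          Real.exp (-∫ r in y..s, (l + μ r + c₁ r + γ₁d r) / γ₁ r))
    :
    ∃! lstar : ℝ, K lstar = 1 := by
  have hmle : (0:ℝ) ≤ m := hm.le
  set P : ℝ → ℝ := fun x => ((projIcc (0:ℝ) m hmle x : Icc (0:ℝ) m) : ℝ) with hPdef
  have hPmem : ∀ x, P x ∈ Icc (0:ℝ) m := fun x => (projIcc (0:ℝ) m hmle x).2
  have hPeq : ∀ x ∈ Icc (0:ℝ) m, P x = x := by
    intro x hx
    rw [hPdef]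
    simp only
    rw [projIcc_of_mem hmle hx]
  have hPc : Continuous P := continuous_subtype_val.comp continuous_projIcc
  have hγ₁cont : ContinuousOn γ₁ (Icc 0 m) := fun s hs => (hγ₁ s hs).continuousWithinAt
  -- extended functions
  set γt : ℝ → ℝ := fun r => γ₁ (P r) with hγtdef
  set gt : ℝ → ℝ := fun r => μ (P r) + c₁ (P r) + γ₁d (P r) with hgtdef
  set β₁t : ℝ → ℝ := fun r => β₁ (P r) with hβ₁tdef
  set β₂t : ℝ → ℝ := fun r => β₂ (P r) with hβ₂tdef
  have hγtc : Continuous γt := hγ₁cont.comp_continuous hPc hPmem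
  have hgtc : Continuous gt := ((hμ.add hc₁).add hγ₁d).comp_continuous hPc hPmem
  have hβ₁tc : Continuous β₁t := hβ₁.comp_continuous hPc hPmem
  have hβ₂tc : Continuous β₂t := hβ₂.comp_continuous hPc hPmem
  -- bounds
  have hne : (Icc (0:ℝ) m).Nonempty := nonempty_Icc.2 hmle
  obtain ⟨r₀, hr₀, hr₀min'⟩ := isCompact_Icc.exists_isMinOn hne hγ₁cont
  have hr₀min := isMinOn_iff.mp hr₀min'
  obtain ⟨r₁, hr₁, hr₁max'⟩ := isCompact_Icc.exists_isMaxOn hne hγ₁cont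
  have hr₁max := isMaxOn_iff.mp hr₁max'
  obtain ⟨G, hG⟩ := isCompact_Icc.exists_bound_of_continuousOn ((hμ.add hc₁).add hγ₁d)
  obtain ⟨rb₁, hrb₁, hrb₁max'⟩ := isCompact_Icc.exists_isMaxOn hne hβ₁
  have hrb₁max := isMaxOn_iff.mp hrb₁max'
  obtain ⟨rb₂, hrb₂, hrb₂max'⟩ := isCompact_Icc.exists_isMaxOn hne hβ₂
  have hrb₂max := isMaxOn_iff.mp hrb₂max'
  have hy₀m : y₀ ∈ Icc (0:ℝ) m := ⟨hy₀, hy₀s₀.le.trans hs₀⟩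
  have hs₀m : s₀ ∈ Icc (0:ℝ) m := ⟨hy₀.trans hy₀s₀.le, hs₀⟩
  have haux := aux_eu m (γ₁ r₁) (γ₁ r₀) G (β₁ rb₁) (β₂ rb₂) y₀ s₀ hm γt gt β₁t β₂t
    hγtc hgtc hβ₁tc hβ₂tc
    (hγ₁pos r₀ hr₀) (fun r => hr₀min _ (hPmem r)) (fun r => hr₁max _ (hPmem r))
    (fun r => by
      have := hG (P r) (hPmem r)
      rw [Real.norm_eq_abs] at this
      exact this)
    (fun r => hβ₁nn _ (hPmem r)) (fun r => hrb₁max _ (hPmem r))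
    (fun r => hβ₂nn _ (hPmem r)) (fun r => hrb₂max _ (hPmem r))
    hy₀ hy₀s₀ hs₀
    (by rw [hβ₁tdef]; simp only; rw [hPeq y₀ hy₀m]; exact hβ₁pos)
    (by rw [hβ₂tdef]; simp only; rw [hPeq s₀ hs₀m]; exact hβ₂pos)
  have hKeq : ∀ l : ℝ, K l = ∫ s in (0:ℝ)..m, β₂t s * ∫ y in (0:ℝ)..s,
      (β₁t y / γt y) * Real.exp (-∫ r in y..s, (l + gt r) / γt r) := by
    intro l
    rw [hK l]
    apply intervalIntegral.integral_congr
    intro s hs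
    rw [uIcc_of_le hmle] at hs
    have hs0 : (0:ℝ) ≤ s := hs.1
    have h2 : β₂ s = β₂t s := by rw [hβ₂tdef]; simp only; rw [hPeq s hs]
    beta_reduce
    rw [h2]
    congr 1
    apply intervalIntegral.integral_congr
    intro y hy
    rw [uIcc_of_le hs0] at hy
    have hym : y ∈ Icc (0:ℝ) m := ⟨hy.1, hy.2.trans hs.2⟩
    have h3 : β₁ y / γ₁ y = β₁t y / γt y := by
      rw [hβ₁tdef, hγtdef]; simp only; rw [hPeq y hym]
    beta_reduce
    rw [h3]
    congr 2
    rw [neg_inj]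
    apply intervalIntegral.integral_congr
    intro r hr
    rw [uIcc_of_le hy.2] at hr
    beta_reduce
    have hrm : r ∈ Icc (0:ℝ) m := ⟨hy.1.trans hr.1, hr.2.trans hs.2⟩
    rw [hgtdef, hγtdef]
    simp only
    rw [hPeq r hrm]
    ring
  obtain ⟨l, hl1, hl2⟩ := haux
  refine ⟨l, ?_, ?_⟩
  · exact (hKeq l).trans hl1
  · intro x hx
    exact hl2 x ((hKeq x).symm.trans hx)
end

section
/- Suppose λ ∈ ℝ satisfies K(λ) = 1, and define u : [0,m] → ℝ by u(s) = ∫₀^s (β₁(y)/γ₁(y)) · exp(−∫_y^s (λ + μ(r) + c₁(r) + γ₁'(r))/γ₁(r) dr) dy. Then u is continuously differentiable, u(0) = 0, u is not identically zero, ∫₀^m β₂(y)u(y) dy = 1, and for every s ∈ [0,m] the function γ₁u is differentiable at s with (γ₁u)'(s) = −(λ + μ(s) + c₁(s))·u(s) + β₁(s)·∫₀^m β₂(y)u(y) dy; that is, λ is an eigenvalue with eigenfunction u of the transport–mortality operator with separable birth kernel β₁(s)β₂(y). -/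
open MeasureTheory Set intervalIntegral

lemma prim_hasDerivAt {g : ℝ → ℝ} (hg : Continuous g) (x : ℝ) :
    HasDerivAt (fun t => ∫ r in (0:ℝ)..t, g r) (g x) x :=
  intervalIntegral.integral_hasDerivAt_right (hg.intervalIntegrable _ _)
    (hg.stronglyMeasurableAtFilter _ _) hg.continuousAt

lemma prim_contDiff {g : ℝ → ℝ} (hg : Continuous g) :
    ContDiff ℝ 1 (fun t => ∫ r in (0:ℝ)..t, g r) := by
  rw [contDiff_one_iff_deriv]
  refine ⟨fun x => (prim_hasDerivAt hg x).differentiableAt, ?_⟩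
  have : deriv (fun t => ∫ r in (0:ℝ)..t, g r) = g :=
    funext fun x => (prim_hasDerivAt hg x).deriv
  rw [this]; exact hg

/-- If `K(λ) = 1` then `u(s) = ∫₀^s (β₁/γ₁) exp(−∫_y^s (λ+μ+c₁+γ₁')/γ₁) dy` is a C¹ nontrivial eigenfunction: `u(0)=0`, `∫₀^m β₂ u = 1`, and `(γ₁u)'(s) = −(λ+μ(s)+c₁(s))u(s) + β₁(s)∫₀^m β₂ u`. -/
theorem stmt_14 (m : ℝ) (hm : 0 < m) (γ₁ γ₁d : ℝ → ℝ)
    (hγ₁ : ∀ s ∈ Icc (0:ℝ) m, HasDerivWithinAt γ₁ (γ₁d s) (Icc 0 m) s)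
    (hγ₁d : ContinuousOn γ₁d (Icc 0 m))
    (hγ₁pos : ∀ s ∈ Icc (0:ℝ) m, 0 < γ₁ s)
    (μ c₁ : ℝ → ℝ)
    (hμ : ContinuousOn μ (Icc 0 m)) (hμnn : ∀ s ∈ Icc (0:ℝ) m, 0 ≤ μ s)
    (hc₁ : ContinuousOn c₁ (Icc 0 m)) (hc₁nn : ∀ s ∈ Icc (0:ℝ) m, 0 ≤ c₁ s)
    (β₁ β₂ : ℝ → ℝ)
    (hβ₁ : ContinuousOn β₁ (Icc 0 m)) (hβ₁nn : ∀ s ∈ Icc (0:ℝ) m, 0 ≤ β₁ s)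
    (hβ₂ : ContinuousOn β₂ (Icc 0 m)) (hβ₂nn : ∀ s ∈ Icc (0:ℝ) m, 0 ≤ β₂ s)
    (y₀ s₀ : ℝ) (hy₀ : 0 ≤ y₀) (hy₀s₀ : y₀ < s₀) (hs₀ : s₀ ≤ m)
    (hβ₁pos : 0 < β₁ y₀) (hβ₂pos : 0 < β₂ s₀)
    (K : ℝ → ℝ)
    (hK : ∀ l : ℝ, K l = ∫ s in (0:ℝ)..m, β₂ s *
        ∫ y in (0:ℝ)..s, (β₁ y / γ₁ y) *
          Real.exp (-∫ r in y..s, (l + μ r + c₁ r + γ₁d r) / γ₁ r))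
    (l : ℝ) (hl : K l = 1) (u : ℝ → ℝ)
    (hu : ∀ s : ℝ, u s = ∫ y in (0:ℝ)..s, (β₁ y / γ₁ y) *
        Real.exp (-∫ r in y..s, (l + μ r + c₁ r + γ₁d r) / γ₁ r)) :
    ContDiffOn ℝ 1 u (Icc 0 m) ∧
    u 0 = 0 ∧
    (∃ s ∈ Icc (0:ℝ) m, u s ≠ 0) ∧
    (∫ y in (0:ℝ)..m, β₂ y * u y) = 1 ∧
    ∀ s ∈ Icc (0:ℝ) m,
      HasDerivWithinAt (fun t => γ₁ t * u t)
        (-(l + μ s + c₁ s) * u s + β₁ s * ∫ y in (0:ℝ)..m, β₂ y * u y)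
        (Icc 0 m) s := by
  -- setup: projection and globally continuous data
  have hγ₁c : ContinuousOn γ₁ (Icc 0 m) := fun s hs => (hγ₁ s hs).continuousWithinAt
  set π : ℝ → ℝ := fun x => ((projIcc (0:ℝ) m hm.le x) : ℝ) with hπdef
  have hπc : Continuous π := continuous_subtype_val.comp continuous_projIcc
  have hπmem : ∀ x, π x ∈ Icc (0:ℝ) m := fun x => (projIcc (0:ℝ) m hm.le x).2
  have hπeq : ∀ x ∈ Icc (0:ℝ) m, π x = x := fun x hx => by
    simp [hπdef, projIcc_of_mem hm.le hx]
  have compc : ∀ {g : ℝ → ℝ}, ContinuousOn g (Icc 0 m) → Continuous (fun x => g (π x)) :=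
    fun {g} hg => hg.comp_continuous hπc hπmem
  set f : ℝ → ℝ := fun r => (l + μ (π r) + c₁ (π r) + γ₁d (π r)) / γ₁ (π r) with hfdef
  have hfc : Continuous f := by
    apply Continuous.div
    · exact ((continuous_const.add (compc hμ)).add (compc hc₁)).add (compc hγ₁d)
    · exact compc hγ₁c
    · exact fun x => (hγ₁pos _ (hπmem x)).ne'
  set F : ℝ → ℝ := fun x => ∫ r in (0:ℝ)..x, f r with hFdef
  have hFc : Continuous F := (prim_contDiff hfc).continuous
  set h : ℝ → ℝ := fun y => (β₁ (π y) / γ₁ (π y)) * Real.exp (F y) with hhdef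
  have hhc : Continuous h := by
    apply Continuous.mul
    · exact (compc hβ₁).div (compc hγ₁c) (fun x => (hγ₁pos _ (hπmem x)).ne')
    · exact Real.continuous_exp.comp hFc
  set G : ℝ → ℝ := fun x => ∫ r in (0:ℝ)..x, h r with hGdef
  set v : ℝ → ℝ := fun x => Real.exp (-F x) * G x with hvdef
  -- u agrees with v on Icc 0 m
  have key : ∀ s ∈ Icc (0:ℝ) m, u s = v s := by
    intro s hs
    have hvs : v s = ∫ y in (0:ℝ)..s, Real.exp (-F s) * h y := by
      rw [hvdef]; exact (intervalIntegral.integral_const_mul _ _).symm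
    rw [hu s, hvs]
    apply intervalIntegral.integral_congr
    intro y hy
    have hy' : y ∈ Icc (0:ℝ) m := by
      rw [uIcc_of_le hs.1] at hy
      exact Icc_subset_Icc le_rfl hs.2 hy
    have hsub : uIcc y s ⊆ Icc (0:ℝ) m := uIcc_subset_Icc hy' hs
    have hint1 : (∫ r in y..s, (l + μ r + c₁ r + γ₁d r) / γ₁ r) = F s - F y := by
      have e1 : (∫ r in y..s, (l + μ r + c₁ r + γ₁d r) / γ₁ r) = ∫ r in y..s, f r := by
        apply intervalIntegral.integral_congr
        intro r hr
        rw [hfdef]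
        simp only [hπeq r (hsub hr)]
      rw [e1, hFdef]
      exact (intervalIntegral.integral_interval_sub_left
        (hfc.intervalIntegrable 0 s) (hfc.intervalIntegrable 0 y)).symm
    simp only [hint1, hhdef, hπeq y hy']
    rw [show -(F s - F y) = F y + -(F s) by ring, Real.exp_add]
    ring
  have hEc : ContDiff ℝ 1 (fun x => Real.exp (-F x)) := by
    have : ContDiff ℝ 1 (fun x => -F x) := (prim_contDiff hfc).neg
    exact Real.contDiff_exp.comp this
  have hvC : ContDiff ℝ 1 v := hEc.mul (prim_contDiff hhc)
  have part1 : ContDiffOn ℝ 1 u (Icc 0 m) :=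
    (hvC.contDiffOn).congr fun x hx => key x hx
  have part2 : u 0 = 0 := by rw [hu 0, intervalIntegral.integral_same]
  have part4 : (∫ y in (0:ℝ)..m, β₂ y * u y) = 1 := by
    rw [← hl, hK]
    simp only [hu]
  have part3 : ∃ s ∈ Icc (0:ℝ) m, u s ≠ 0 := by
    by_contra h0
    push_neg at h0
    have hz : (∫ y in (0:ℝ)..m, β₂ y * u y) = 0 := by
      have heq : EqOn (fun y => β₂ y * u y) (fun _ => (0:ℝ)) (uIcc 0 m) := by
        intro y hy
        rw [uIcc_of_le hm.le] at hy
        simp [h0 y hy]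
      rw [intervalIntegral.integral_congr heq]
      simp
    rw [part4] at hz
    exact one_ne_zero hz
  refine ⟨part1, part2, part3, part4, ?_⟩
  intro s hs
  have hvd : HasDerivAt v (Real.exp (-F s) * (-f s) * G s + Real.exp (-F s) * h s) s := by
    have h1 : HasDerivAt (fun x => Real.exp (-F x)) (Real.exp (-F s) * (-f s)) s :=
      by have := (Real.hasDerivAt_exp (-F s)).comp s ((prim_hasDerivAt hfc s).neg); exact this
    exact h1.mul (prim_hasDerivAt hhc s)
  have hud : HasDerivWithinAt u (Real.exp (-F s) * (-f s) * G s + Real.exp (-F s) * h s)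
      (Icc 0 m) s :=
    (hvd.hasDerivWithinAt).congr (fun x hx => key x hx) (key s hs)
  have hmain : HasDerivWithinAt (fun t => γ₁ t * u t) _ (Icc 0 m) s := (hγ₁ s hs).mul hud
  convert hmain using 1
  rw [part4]
  have hπs := hπeq s hs
  have hγne : γ₁ s ≠ 0 := (hγ₁pos s hs).ne'
  have hus : u s = Real.exp (-F s) * G s := key s hs
  rw [hfdef, hhdef]
  simp only [hπs]
  rw [hus, Real.exp_neg]
  field_simp
  ring
end

section
/- Let λ ∈ ℝ and suppose u : [0,m] → ℝ is continuously differentiable, not identically zero, satisfies u(0) = 0, and for every s ∈ [0,m] satisfies (γ₁u)'(s) = −(λ + μ(s) + c₁(s))·u(s) + β₁(s)·∫₀^m β₂(y)u(y) dy. Then K(λ) = 1; that is, the eigenvalue equation with separable birth kernel β₁(s)β₂(y) admits a nontrivial solution only if λ solves the characteristic equation. -/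
open MeasureTheory Set intervalIntegral

/-- If the eigenvalue equation with separable birth kernel `β₁(s)β₂(y)` admits a nontrivial C¹ solution `u` with `u(0) = 0`, then `K(λ) = 1`. -/
theorem stmt_15 (m : ℝ) (hm : 0 < m) (γ₁ γ₁d : ℝ → ℝ)
    (hγ₁ : ∀ s ∈ Icc (0:ℝ) m, HasDerivWithinAt γ₁ (γ₁d s) (Icc 0 m) s)
    (hγ₁d : ContinuousOn γ₁d (Icc 0 m))
    (hγ₁pos : ∀ s ∈ Icc (0:ℝ) m, 0 < γ₁ s)
    (μ c₁ : ℝ → ℝ)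
    (hμ : ContinuousOn μ (Icc 0 m)) (hμnn : ∀ s ∈ Icc (0:ℝ) m, 0 ≤ μ s)
    (hc₁ : ContinuousOn c₁ (Icc 0 m)) (hc₁nn : ∀ s ∈ Icc (0:ℝ) m, 0 ≤ c₁ s)
    (β₁ β₂ : ℝ → ℝ)
    (hβ₁ : ContinuousOn β₁ (Icc 0 m)) (hβ₁nn : ∀ s ∈ Icc (0:ℝ) m, 0 ≤ β₁ s)
    (hβ₂ : ContinuousOn β₂ (Icc 0 m)) (hβ₂nn : ∀ s ∈ Icc (0:ℝ) m, 0 ≤ β₂ s)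
    (y₀ s₀ : ℝ) (hy₀ : 0 ≤ y₀) (hy₀s₀ : y₀ < s₀) (hs₀ : s₀ ≤ m)
    (hβ₁pos : 0 < β₁ y₀) (hβ₂pos : 0 < β₂ s₀)
    (K : ℝ → ℝ)
    (hK : ∀ l : ℝ, K l = ∫ s in (0:ℝ)..m, β₂ s *
        ∫ y in (0:ℝ)..s, (β₁ y / γ₁ y) *
          Real.exp (-∫ r in y..s, (l + μ r + c₁ r + γ₁d r) / γ₁ r))
    (l : ℝ) (u : ℝ → ℝ)
    (huC : ContDiffOn ℝ 1 u (Icc 0 m))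
    (hunz : ∃ s ∈ Icc (0:ℝ) m, u s ≠ 0)
    (hu0 : u 0 = 0)
    (hode : ∀ s ∈ Icc (0:ℝ) m,
      HasDerivWithinAt (fun t => γ₁ t * u t)
        (-(l + μ s + c₁ s) * u s + β₁ s * ∫ y in (0:ℝ)..m, β₂ y * u y)
        (Icc 0 m) s) :
    K l = 1 := by
  have hm' : (0:ℝ) ≤ m := hm.le
  have hIcc : uIcc (0:ℝ) m = Icc 0 m := uIcc_of_le hm'
  have hucont : ContinuousOn u (Icc 0 m) := huC.continuousOn
  have hγcont : ContinuousOn γ₁ (Icc 0 m) := fun x hx => (hγ₁ x hx).continuousWithinAt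
  have hγne : ∀ s ∈ Icc (0:ℝ) m, γ₁ s ≠ 0 := fun s hs => (hγ₁pos s hs).ne'
  set B : ℝ := ∫ y in (0:ℝ)..m, β₂ y * u y with hB
  set a : ℝ → ℝ := fun r => (l + μ r + c₁ r) / γ₁ r with ha
  have hacont : ContinuousOn a (Icc 0 m) :=
    ((continuousOn_const.add hμ).add hc₁).div hγcont hγne
  -- integrability helper
  have hint : ∀ (f : ℝ → ℝ), ContinuousOn f (Icc 0 m) → ∀ x ∈ Icc (0:ℝ) m,
      ∀ y ∈ Icc (0:ℝ) m, IntervalIntegrable f volume x y := by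
    intro f hf x hx y hy
    refine (hf.mono ?_).intervalIntegrable
    rw [← hIcc]
    exact uIcc_subset_uIcc (by rwa [hIcc]) (by rwa [hIcc])
  have h0m : (0:ℝ) ∈ Icc (0:ℝ) m := left_mem_Icc.2 hm'
  set F : ℝ → ℝ := fun s => ∫ r in (0:ℝ)..s, a r with hFdef
  -- FTC : derivative of F within Icc
  have hFTC : ∀ (f : ℝ → ℝ), ContinuousOn f (Icc 0 m) → ∀ s ∈ Icc (0:ℝ) m,
      HasDerivWithinAt (fun t => ∫ r in (0:ℝ)..t, f r) (f s) (Icc 0 m) s := by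
    intro f hf s hs
    haveI : Fact (s ∈ Icc (0:ℝ) m) := ⟨hs⟩
    exact intervalIntegral.integral_hasDerivWithinAt_right
      (hint f hf 0 h0m s hs)
      (hf.stronglyMeasurableAtFilter_nhdsWithin measurableSet_Icc s)
      (hf s hs)
  have hF : ∀ s ∈ Icc (0:ℝ) m, HasDerivWithinAt F (a s) (Icc 0 m) s := hFTC a hacont
  set g : ℝ → ℝ := fun y => Real.exp (F y) * β₁ y with hg
  have hFcont : ContinuousOn F (Icc 0 m) := fun s hs => (hF s hs).continuousWithinAt
  have hgcont : ContinuousOn g (Icc 0 m) := (hFcont.rexp).mul hβ₁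
  set G : ℝ → ℝ := fun s => Real.exp (F s) * (γ₁ s * u s) - B * ∫ y in (0:ℝ)..s, g y with hG
  have hGderiv : ∀ s ∈ Icc (0:ℝ) m, HasDerivWithinAt G 0 (Icc 0 m) s := by
    intro s hs
    have h1 : HasDerivWithinAt (fun t => Real.exp (F t)) (Real.exp (F s) * a s) (Icc 0 m) s :=
      (hF s hs).exp
    have h2 := hode s hs
    have h3 : HasDerivWithinAt (fun t => ∫ y in (0:ℝ)..t, g y) (g s) (Icc 0 m) s :=
      hFTC g hgcont s hs
    have h4 := (h1.mul h2).sub (h3.const_mul B)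
    refine HasDerivWithinAt.congr_deriv h4 ?_
    have hγs := hγne s hs
    simp only [hg, ha]
    field_simp
    ring
  have hG0 : G 0 = 0 := by
    simp [hG, hu0, intervalIntegral.integral_same]
  have hGzero : ∀ s ∈ Icc (0:ℝ) m, G s = 0 := by
    intro s hs
    have := constant_of_has_deriv_right_zero (f := G) (a := 0) (b := m)
      (fun x hx => (hGderiv x hx).continuousWithinAt)
      (fun x hx => (hGderiv x ⟨hx.1, hx.2.le⟩).mono_of_mem_nhdsWithin (Icc_mem_nhdsGE_of_mem hx))
      s hs
    rw [this, hG0]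
  -- formula for γ₁ * u
  have hform : ∀ s ∈ Icc (0:ℝ) m, γ₁ s * u s = B * (∫ y in (0:ℝ)..s, g y) / Real.exp (F s) := by
    intro s hs
    have := hGzero s hs
    have hE : Real.exp (F s) ≠ 0 := (Real.exp_pos _).ne'
    simp only [hG] at this
    field_simp at this ⊢
    linarith [this]
  have huform : ∀ s ∈ Icc (0:ℝ) m,
      u s = B * ((∫ y in (0:ℝ)..s, g y) / (Real.exp (F s) * γ₁ s)) := by
    intro s hs
    have h := hform s hs
    have hγs := hγne s hs
    have hE : Real.exp (F s) ≠ 0 := (Real.exp_pos _).ne'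
    field_simp at h ⊢
    linarith [h]
  -- compute K l
  have hKval : K l = ∫ s in (0:ℝ)..m,
      β₂ s * ((∫ y in (0:ℝ)..s, g y) / (Real.exp (F s) * γ₁ s)) := by
    rw [hK l]
    apply intervalIntegral.integral_congr
    intro s hs
    rw [hIcc] at hs
    have hs0 : (0:ℝ) ≤ s := hs.1
    dsimp only
    congr 1
    have hinner : ∀ y ∈ uIcc (0:ℝ) s,
        (β₁ y / γ₁ y) * Real.exp (-∫ r in y..s, (l + μ r + c₁ r + γ₁d r) / γ₁ r)
          = g y / (Real.exp (F s) * γ₁ s) := by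
      intro y hy
      rw [uIcc_of_le hs0] at hy
      have hym : y ∈ Icc (0:ℝ) m := ⟨hy.1, hy.2.trans hs.2⟩
      have hys : y ≤ s := hy.2
      have hsubYS : Icc y s ⊆ Icc (0:ℝ) m := Icc_subset_Icc hy.1 hs.2
      -- split the integral
      have hsplit : (∫ r in y..s, (l + μ r + c₁ r + γ₁d r) / γ₁ r)
          = (F s - F y) + (Real.log (γ₁ s) - Real.log (γ₁ y)) := by
        have hia : IntervalIntegrable a volume y s := hint a hacont y hym s hs
        have hilog : IntervalIntegrable (fun r => γ₁d r / γ₁ r) volume y s :=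
          hint _ (hγ₁d.div hγcont hγne) y hym s hs
        have h1 : (∫ r in y..s, (l + μ r + c₁ r + γ₁d r) / γ₁ r)
            = ∫ r in y..s, (a r + γ₁d r / γ₁ r) := by
          apply intervalIntegral.integral_congr
          intro r hr
          rw [uIcc_of_le hys] at hr
          simp only [ha]
          rw [← add_div]
        rw [h1, intervalIntegral.integral_add hia hilog]
        have h2 : (∫ r in y..s, a r) = F s - F y := by
          rw [hFdef]
          exact (intervalIntegral.integral_interval_sub_left
            (hint a hacont 0 h0m s hs) (hint a hacont 0 h0m y hym)).symm
        have h3 : (∫ r in y..s, γ₁d r / γ₁ r) = Real.log (γ₁ s) - Real.log (γ₁ y) := by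
          apply intervalIntegral.integral_eq_sub_of_hasDeriv_right_of_le hys
          · exact (hγcont.mono hsubYS).log (fun x hx => hγne x (hsubYS hx))
          · intro r hr
            have hrm : r ∈ Icc (0:ℝ) m := ⟨hy.1.trans hr.1.le, hr.2.le.trans hs.2⟩
            have hrint : (0:ℝ) < r ∧ r < m :=
              ⟨lt_of_le_of_lt hy.1 hr.1, lt_of_lt_of_le hr.2 hs.2⟩
            have hd : HasDerivAt γ₁ (γ₁d r) r :=
              (hγ₁ r hrm).hasDerivAt (Icc_mem_nhds hrint.1 hrint.2)
            exact ((hd.log (hγne r hrm)).hasDerivWithinAt)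
          · exact hint _ (hγ₁d.div hγcont hγne) y hym s hs
        rw [h2, h3]
      rw [hsplit]
      have hγy := hγ₁pos y hym
      have hγs' := hγ₁pos s hs
      rw [neg_add, Real.exp_add, neg_sub, neg_sub, Real.exp_sub, Real.exp_sub,
        Real.exp_log hγs', Real.exp_log hγy]
      simp only [hg]
      field_simp
    rw [intervalIntegral.integral_congr hinner, intervalIntegral.integral_div]
  -- B = B * K l
  have hBeq : B = B * K l := by
    have h1 : (∫ y in (0:ℝ)..m, β₂ y * u y) = ∫ s in (0:ℝ)..m,
        B * (β₂ s * ((∫ y in (0:ℝ)..s, g y) / (Real.exp (F s) * γ₁ s))) := by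
      apply intervalIntegral.integral_congr
      intro s hs
      rw [hIcc] at hs
      dsimp only
      rw [huform s hs]
      ring
    calc B = ∫ s in (0:ℝ)..m,
        B * (β₂ s * ((∫ y in (0:ℝ)..s, g y) / (Real.exp (F s) * γ₁ s))) := h1
    _ = B * ∫ s in (0:ℝ)..m,
        β₂ s * ((∫ y in (0:ℝ)..s, g y) / (Real.exp (F s) * γ₁ s)) :=
      intervalIntegral.integral_const_mul _ _
    _ = B * K l := by rw [hKval]
  by_cases hBz : B = 0
  · exfalso
    obtain ⟨s, hs, hus⟩ := hunz
    apply hus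
    rw [huform s hs, hBz, zero_mul]
  · have := hBeq
    nth_rewrite 1 [← mul_one B] at this
    exact (mul_left_cancel₀ hBz this).symm
end

section
/- Let m > 0, let γ₁, γ₂ ∈ C¹([0,m]) with γ₁ > 0 and γ₂ > 0, let μ, c₁, c₂ : [0,m] → ℝ be continuous and nonnegative, and set τ = ∫₀^m 1/min(γ₁(r), γ₂(r)) dr. Let T > τ and suppose u₁, u₂ : [0,m] × [0,T] → ℝ are continuously differentiable, nonnegative, satisfy ∂ₜu₁(s,t) + ∂ₛ(γ₁(s)u₁(s,t)) = −(μ(s) + c₁(s))u₁(s,t) + c₂(s)u₂(s,t) and ∂ₜu₂(s,t) + ∂ₛ(γ₂(s)u₂(s,t)) = c₁(s)u₁(s,t) − c₂(s)u₂(s,t) for all (s,t) ∈ [0,m] × [0,T], and satisfy the boundary conditions u₁(0,t) = u₂(0,t) = 0 for all t ∈ [0,T]. Then u₁(s,t) = 0 and u₂(s,t) = 0 for all s ∈ [0,m] and all t with τ ≤ t ≤ T (the underlying transport semigroup without birth term is nilpotent). -/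
open MeasureTheory Set

set_option maxHeartbeats 1000000

/-- A continuous nonnegative function on `[0,m]` with zero integral vanishes. -/
lemma aux_zero_of_integral_zero {m : ℝ} (hm : 0 < m) {f : ℝ → ℝ} (hf : Continuous f)
    (hnn : ∀ x, 0 ≤ f x) (hint : (∫ x in (0:ℝ)..m, f x) = 0) {s : ℝ}
    (hs : s ∈ Icc 0 m) : f s = 0 := by
  by_contra h
  have hc : 0 < f s := lt_of_le_of_ne (hnn s) (Ne.symm h)
  have hUopen : IsOpen (f ⁻¹' Ioi (f s / 2)) := isOpen_Ioi.preimage hf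
  have hsU : s ∈ f ⁻¹' Ioi (f s / 2) := by simp; linarith
  obtain ⟨ε, hε, hball⟩ := Metric.isOpen_iff.1 hUopen s hsU
  set a := max 0 (s - ε / 2) with ha
  set b := min m (s + ε / 2) with hb
  have hab : a < b := by
    rcases hs with ⟨hs0, hsm⟩
    apply max_lt <;> [skip; skip] <;> apply lt_min <;> linarith
  have h0a : 0 ≤ a := le_max_left _ _
  have hbm : b ≤ m := min_le_left _ _
  have hsub : ∀ x ∈ Icc a b, f s / 2 ≤ f x := by
    intro x hx
    have : x ∈ Metric.ball s ε := by
      rw [Metric.mem_ball, Real.dist_eq, abs_sub_lt_iff]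
      rcases hx with ⟨hxa, hxb⟩
      constructor <;> [skip; skip] <;>
        [nlinarith [le_max_right 0 (s - ε/2), ha ▸ hxa, min_le_right m (s + ε/2)];
         nlinarith [le_max_right 0 (s - ε/2), min_le_right m (s + ε/2)]]
    exact le_of_lt (hball this)
  have hfi : ∀ p q : ℝ, IntervalIntegrable f volume p q := fun p q =>
    hf.intervalIntegrable p q
  have h1 : (∫ x in (0:ℝ)..a, f x) + (∫ x in a..b, f x) + (∫ x in b..m, f x)
      = ∫ x in (0:ℝ)..m, f x := by
    rw [intervalIntegral.integral_add_adjacent_intervals (hfi 0 a) (hfi a b)]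
    exact intervalIntegral.integral_add_adjacent_intervals (hfi 0 b) (hfi b m)
  have h2 : 0 ≤ ∫ x in (0:ℝ)..a, f x :=
    intervalIntegral.integral_nonneg h0a (fun x _ => hnn x)
  have h3 : 0 ≤ ∫ x in b..m, f x :=
    intervalIntegral.integral_nonneg hbm (fun x _ => hnn x)
  have h4 : (b - a) * (f s / 2) ≤ ∫ x in a..b, f x := by
    have := intervalIntegral.integral_mono_on (le_of_lt hab)
      (intervalIntegrable_const (c := f s / 2)) (hfi a b) hsub
    simpa [intervalIntegral.integral_const, smul_eq_mul, mul_div_assoc] using this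
  have hpos : 0 < (b - a) * (f s / 2) := by
    apply mul_pos (by linarith) (by linarith)
  rw [hint] at h1
  linarith


/-- For the two-phase transport system without birth term, with zero inflow at size `0`,
nonnegative C¹ solutions vanish identically for times `t ≥ τ = ∫₀^m 1/min(γ₁,γ₂)`:
the underlying transport semigroup is nilpotent. -/
theorem stmt_17 (m : ℝ) (hm : 0 < m) (γ₁ γ₂ : ℝ → ℝ)
    (hγ₁ : ContDiffOn ℝ 1 γ₁ (Icc 0 m)) (hγ₂ : ContDiffOn ℝ 1 γ₂ (Icc 0 m))
    (hγ₁pos : ∀ s ∈ Icc (0:ℝ) m, 0 < γ₁ s)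
    (hγ₂pos : ∀ s ∈ Icc (0:ℝ) m, 0 < γ₂ s)
    (μ c₁ c₂ : ℝ → ℝ)
    (hμ : ContinuousOn μ (Icc 0 m)) (hμnn : ∀ s ∈ Icc (0:ℝ) m, 0 ≤ μ s)
    (hc₁ : ContinuousOn c₁ (Icc 0 m)) (hc₁nn : ∀ s ∈ Icc (0:ℝ) m, 0 ≤ c₁ s)
    (hc₂ : ContinuousOn c₂ (Icc 0 m)) (hc₂nn : ∀ s ∈ Icc (0:ℝ) m, 0 ≤ c₂ s)
    (T : ℝ) (hT : (∫ r in (0:ℝ)..m, 1 / min (γ₁ r) (γ₂ r)) < T)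
    (u₁ u₂ : ℝ → ℝ → ℝ)
    (hu₁C : ContDiffOn ℝ 1 (fun p : ℝ × ℝ => u₁ p.1 p.2) (Icc 0 m ×ˢ Icc 0 T))
    (hu₂C : ContDiffOn ℝ 1 (fun p : ℝ × ℝ => u₂ p.1 p.2) (Icc 0 m ×ˢ Icc 0 T))
    (hu₁nn : ∀ s ∈ Icc (0:ℝ) m, ∀ t ∈ Icc (0:ℝ) T, 0 ≤ u₁ s t)
    (hu₂nn : ∀ s ∈ Icc (0:ℝ) m, ∀ t ∈ Icc (0:ℝ) T, 0 ≤ u₂ s t)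
    (d₁t d₁s d₂t d₂s : ℝ → ℝ → ℝ)
    (hd₁t : ∀ s ∈ Icc (0:ℝ) m, ∀ t ∈ Icc (0:ℝ) T,
      HasDerivWithinAt (fun t' => u₁ s t') (d₁t s t) (Icc 0 T) t)
    (hd₁s : ∀ s ∈ Icc (0:ℝ) m, ∀ t ∈ Icc (0:ℝ) T,
      HasDerivWithinAt (fun s' => γ₁ s' * u₁ s' t) (d₁s s t) (Icc 0 m) s)
    (hd₂t : ∀ s ∈ Icc (0:ℝ) m, ∀ t ∈ Icc (0:ℝ) T,
      HasDerivWithinAt (fun t' => u₂ s t') (d₂t s t) (Icc 0 T) t)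
    (hd₂s : ∀ s ∈ Icc (0:ℝ) m, ∀ t ∈ Icc (0:ℝ) T,
      HasDerivWithinAt (fun s' => γ₂ s' * u₂ s' t) (d₂s s t) (Icc 0 m) s)
    (pde₁ : ∀ s ∈ Icc (0:ℝ) m, ∀ t ∈ Icc (0:ℝ) T,
      d₁t s t + d₁s s t = -(μ s + c₁ s) * u₁ s t + c₂ s * u₂ s t)
    (pde₂ : ∀ s ∈ Icc (0:ℝ) m, ∀ t ∈ Icc (0:ℝ) T,
      d₂t s t + d₂s s t = c₁ s * u₁ s t - c₂ s * u₂ s t)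
    (hbc₁ : ∀ t ∈ Icc (0:ℝ) T, u₁ 0 t = 0)
    (hbc₂ : ∀ t ∈ Icc (0:ℝ) T, u₂ 0 t = 0) :
    ∀ s ∈ Icc (0:ℝ) m, ∀ t : ℝ,
      (∫ r in (0:ℝ)..m, 1 / min (γ₁ r) (γ₂ r)) ≤ t → t ≤ T →
        u₁ s t = 0 ∧ u₂ s t = 0 := by
  set τ := ∫ r in (0:ℝ)..m, 1 / min (γ₁ r) (γ₂ r) with hτdef
  have hm0 : (0:ℝ) ≤ m := hm.le
  -- clamping maps
  set ι : ℝ → ℝ := fun r => max 0 (min r m) with hιdef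
  set κ : ℝ → ℝ := fun r => max 0 (min r T) with hκdef
  have hιmem : ∀ r, ι r ∈ Icc (0:ℝ) m := fun r =>
    ⟨le_max_left _ _, max_le hm0 (min_le_right _ _)⟩
  have hιeq : ∀ r ∈ Icc (0:ℝ) m, ι r = r := by
    intro r hr; simp only [hιdef]; rw [min_eq_left hr.2, max_eq_right hr.1]
  have hιcont : Continuous ι := continuous_const.max (continuous_id.min continuous_const)
  have hκcont : Continuous κ := continuous_const.max (continuous_id.min continuous_const)
  -- τ is nonnegative, so T > 0
  have hτ0 : 0 ≤ τ := by
    rw [hτdef]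
    refine intervalIntegral.integral_nonneg hm0 (fun r hr => ?_)
    have : 0 < min (γ₁ r) (γ₂ r) := lt_min (hγ₁pos r hr) (hγ₂pos r hr)
    positivity
  have hT0 : 0 < T := lt_of_le_of_lt hτ0 hT
  have hT0' : (0:ℝ) ≤ T := hT0.le
  have hκmem : ∀ r, κ r ∈ Icc (0:ℝ) T := fun r =>
    ⟨le_max_left _ _, max_le hT0' (min_le_right _ _)⟩
  have hκeq : ∀ r ∈ Icc (0:ℝ) T, κ r = r := by
    intro r hr; simp only [hκdef]; rw [min_eq_left hr.2, max_eq_right hr.1]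
  -- the slowness function g and time function φ
  set g : ℝ → ℝ := fun r => 1 / min (γ₁ (ι r)) (γ₂ (ι r)) with hgdef
  have hγι₁ : Continuous fun r => γ₁ (ι r) :=
    hγ₁.continuousOn.comp_continuous hιcont hιmem
  have hγι₂ : Continuous fun r => γ₂ (ι r) :=
    hγ₂.continuousOn.comp_continuous hιcont hιmem
  have hminpos : ∀ r, 0 < min (γ₁ (ι r)) (γ₂ (ι r)) := fun r =>
    lt_min (hγ₁pos _ (hιmem r)) (hγ₂pos _ (hιmem r))
  have hgcont : Continuous g := by
    simp only [hgdef]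
    exact continuous_const.div (hγι₁.min hγι₂) fun r => (hminpos r).ne'
  have hgpos : ∀ r, 0 < g r := fun r => by
    simp only [hgdef]; exact one_div_pos.2 (hminpos r)
  set φ : ℝ → ℝ := fun x => ∫ r in (0:ℝ)..x, g r with hφdef
  have hφd : ∀ x, HasDerivAt φ (g x) x := fun x =>
    intervalIntegral.integral_hasDerivAt_right (hgcont.intervalIntegrable _ _)
      hgcont.stronglyMeasurable.stronglyMeasurableAtFilter hgcont.continuousAt
  have hφcont : Continuous φ := continuous_iff_continuousAt.2 fun x => (hφd x).continuousAt
  have hφτ : φ m = τ := by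
    simp only [hφdef, hτdef]
    refine intervalIntegral.integral_congr (fun r hr => ?_)
    rw [uIcc_of_le hm0] at hr
    simp only [hgdef, hιeq r hr]
  have hφnn : ∀ s ∈ Icc (0:ℝ) m, 0 ≤ φ s := by
    intro s hs
    exact intervalIntegral.integral_nonneg hs.1 (fun r _ => (hgpos r).le)
  have hφle : ∀ s ∈ Icc (0:ℝ) m, φ s ≤ τ := by
    intro s hs
    rw [← hφτ]
    have h1 : φ s + (∫ r in s..m, g r) = φ m := by
      simp only [hφdef]
      exact intervalIntegral.integral_add_adjacent_intervals
        (hgcont.intervalIntegrable _ _) (hgcont.intervalIntegrable _ _)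
    have h2 : 0 ≤ ∫ r in s..m, g r :=
      intervalIntegral.integral_nonneg hs.2 (fun r _ => (hgpos r).le)
    linarith
  have hkey : ∀ s ∈ Icc (0:ℝ) m, 1 ≤ γ₁ s * g s ∧ 1 ≤ γ₂ s * g s := by
    intro s hs
    have h1 := hγ₁pos s hs; have h2 := hγ₂pos s hs
    have hg : g s = 1 / min (γ₁ s) (γ₂ s) := by simp only [hgdef, hιeq s hs]
    have hmin : 0 < min (γ₁ s) (γ₂ s) := lt_min h1 h2
    constructor <;> rw [hg, mul_one_div, le_div_iff₀ hmin, one_mul]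
    · exact min_le_left _ _
    · exact min_le_right _ _
  -- unique differentiability
  have hUDs : UniqueDiffOn ℝ (Icc (0:ℝ) m) := uniqueDiffOn_Icc hm
  have hUDt : UniqueDiffOn ℝ (Icc (0:ℝ) T) := uniqueDiffOn_Icc hT0
  have hUD : UniqueDiffOn ℝ ((Icc (0:ℝ) m) ×ˢ (Icc (0:ℝ) T)) := hUDs.prod hUDt
  -- identification of the time derivatives
  have identT : ∀ (u du : ℝ → ℝ → ℝ),
      ContDiffOn ℝ 1 (fun p : ℝ × ℝ => u p.1 p.2) ((Icc (0:ℝ) m) ×ˢ (Icc (0:ℝ) T)) →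
      (∀ s ∈ Icc (0:ℝ) m, ∀ t ∈ Icc (0:ℝ) T,
        HasDerivWithinAt (fun t' => u s t') (du s t) (Icc 0 T) t) →
      ∀ s ∈ Icc (0:ℝ) m, ∀ t ∈ Icc (0:ℝ) T,
        du s t = fderivWithin ℝ (fun p : ℝ × ℝ => u p.1 p.2)
          ((Icc (0:ℝ) m) ×ˢ (Icc (0:ℝ) T)) (s, t) (0, 1) := by
    intro u du hC hd s hs t ht
    have hfd : HasFDerivWithinAt (fun p : ℝ × ℝ => u p.1 p.2)
        (fderivWithin ℝ (fun p : ℝ × ℝ => u p.1 p.2) ((Icc (0:ℝ) m) ×ˢ (Icc (0:ℝ) T)) (s, t))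
        ((Icc (0:ℝ) m) ×ˢ (Icc (0:ℝ) T)) (s, t) :=
      (hC.differentiableOn one_ne_zero (s, t) ⟨hs, ht⟩).hasFDerivWithinAt
    have hL : HasDerivWithinAt (fun t' => ((s, t') : ℝ × ℝ)) ((0:ℝ), (1:ℝ)) (Icc 0 T) t :=
      (hasDerivWithinAt_const t _ s).prodMk (hasDerivWithinAt_id t _)
    have hcomp := hfd.comp_hasDerivWithinAt t hL (fun t' ht' => ⟨hs, ht'⟩)
    exact UniqueDiffWithinAt.eq_deriv _ (hUDt t ht) (hd s hs t ht) hcomp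
  -- identification of the space derivatives
  have identS : ∀ (γ : ℝ → ℝ) (u du : ℝ → ℝ → ℝ), ContDiffOn ℝ 1 γ (Icc 0 m) →
      ContDiffOn ℝ 1 (fun p : ℝ × ℝ => u p.1 p.2) ((Icc (0:ℝ) m) ×ˢ (Icc (0:ℝ) T)) →
      (∀ s ∈ Icc (0:ℝ) m, ∀ t ∈ Icc (0:ℝ) T,
        HasDerivWithinAt (fun s' => γ s' * u s' t) (du s t) (Icc 0 m) s) →
      ∀ s ∈ Icc (0:ℝ) m, ∀ t ∈ Icc (0:ℝ) T,
        du s t = derivWithin γ (Icc 0 m) s * u s t + γ s *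
          (fderivWithin ℝ (fun p : ℝ × ℝ => u p.1 p.2)
            ((Icc (0:ℝ) m) ×ˢ (Icc (0:ℝ) T)) (s, t) (1, 0)) := by
    intro γ u du hγC hC hd s hs t ht
    have hγd : HasDerivWithinAt γ (derivWithin γ (Icc 0 m) s) (Icc 0 m) s :=
      (hγC.differentiableOn one_ne_zero s hs).hasDerivWithinAt
    have hfd : HasFDerivWithinAt (fun p : ℝ × ℝ => u p.1 p.2)
        (fderivWithin ℝ (fun p : ℝ × ℝ => u p.1 p.2) ((Icc (0:ℝ) m) ×ˢ (Icc (0:ℝ) T)) (s, t))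
        ((Icc (0:ℝ) m) ×ˢ (Icc (0:ℝ) T)) (s, t) :=
      (hC.differentiableOn one_ne_zero (s, t) ⟨hs, ht⟩).hasFDerivWithinAt
    have hL : HasDerivWithinAt (fun s' => ((s', t) : ℝ × ℝ)) ((1:ℝ), (0:ℝ)) (Icc 0 m) s :=
      (hasDerivWithinAt_id s _).prodMk (hasDerivWithinAt_const s _ t)
    have hucomp : HasDerivWithinAt (fun s' => u s' t)
        (fderivWithin ℝ (fun p : ℝ × ℝ => u p.1 p.2)
          ((Icc (0:ℝ) m) ×ˢ (Icc (0:ℝ) T)) (s, t) (1, 0)) (Icc 0 m) s :=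
      hfd.comp_hasDerivWithinAt (f := fun s' => ((s', t) : ℝ × ℝ)) s hL (fun s' hs' => ⟨hs', ht⟩)
    exact UniqueDiffWithinAt.eq_deriv _ (hUDs s hs) (hd s hs t ht) (hγd.mul hucomp)
  -- continuity of partial derivatives
  set P₁ := fderivWithin ℝ (fun p : ℝ × ℝ => u₁ p.1 p.2) ((Icc (0:ℝ) m) ×ˢ (Icc (0:ℝ) T))
    with hP₁def
  set P₂ := fderivWithin ℝ (fun p : ℝ × ℝ => u₂ p.1 p.2) ((Icc (0:ℝ) m) ×ˢ (Icc (0:ℝ) T))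
    with hP₂def
  have hP₁c : ContinuousOn P₁ ((Icc (0:ℝ) m) ×ˢ (Icc (0:ℝ) T)) :=
    hu₁C.continuousOn_fderivWithin hUD le_rfl
  have hP₂c : ContinuousOn P₂ ((Icc (0:ℝ) m) ×ˢ (Icc (0:ℝ) T)) :=
    hu₂C.continuousOn_fderivWithin hUD le_rfl
  have eq₁t := identT u₁ d₁t hu₁C hd₁t
  have eq₂t := identT u₂ d₂t hu₂C hd₂t
  have eq₁s := identS γ₁ u₁ d₁s hγ₁ hu₁C hd₁s
  have eq₂s := identS γ₂ u₂ d₂s hγ₂ hu₂C hd₂s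
  have cγ₁' : ContinuousOn (derivWithin γ₁ (Icc 0 m)) (Icc (0:ℝ) m) :=
    hγ₁.continuousOn_derivWithin hUDs le_rfl
  have cγ₂' : ContinuousOn (derivWithin γ₂ (Icc 0 m)) (Icc (0:ℝ) m) :=
    hγ₂.continuousOn_derivWithin hUDs le_rfl
  -- Step A: the space estimate
  have stepA : ∀ K : ℝ, 0 ≤ K → ∀ t ∈ Icc (0:ℝ) T,
      (∫ s in (0:ℝ)..m,
        ((d₁t s t + d₂t s t) + K * (u₁ s t + u₂ s t)) * Real.exp (K * (t - φ s))) ≤ 0 := by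
    intro K hK t ht
    set e : ℝ → ℝ := fun s => Real.exp (K * (t - φ s)) with hedef
    have hecont : Continuous e := by
      simp only [hedef]
      exact Real.continuous_exp.comp (continuous_const.mul (continuous_const.sub hφcont))
    have hepos : ∀ s, 0 < e s := fun s => Real.exp_pos _
    have hed : ∀ s, HasDerivAt e (e s * (K * -g s)) s := fun s =>
      (((hφd s).const_sub t).const_mul K).exp
    -- continuity of slices
    have hslice : ContinuousOn (fun s => ((s, t) : ℝ × ℝ)) (Icc (0:ℝ) m) :=
      (continuous_id.prodMk continuous_const).continuousOn
    have hsliceMem : MapsTo (fun s => ((s, t) : ℝ × ℝ)) (Icc (0:ℝ) m)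
        ((Icc (0:ℝ) m) ×ˢ (Icc (0:ℝ) T)) := fun s hs => ⟨hs, ht⟩
    have hu₁sl : ContinuousOn (fun s => u₁ s t) (Icc (0:ℝ) m) :=
      hu₁C.continuousOn.comp hslice hsliceMem
    have hu₂sl : ContinuousOn (fun s => u₂ s t) (Icc (0:ℝ) m) :=
      hu₂C.continuousOn.comp hslice hsliceMem
    have hP₁sl : ContinuousOn (fun s => P₁ (s, t)) (Icc (0:ℝ) m) :=
      hP₁c.comp hslice hsliceMem
    have hP₂sl : ContinuousOn (fun s => P₂ (s, t)) (Icc (0:ℝ) m) :=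
      hP₂c.comp hslice hsliceMem
    have hdtsl : ContinuousOn (fun s => d₁t s t + d₂t s t) (Icc (0:ℝ) m) := by
      refine ContinuousOn.congr ((hP₁sl.clm_apply (continuousOn_const (c := ((0:ℝ),(1:ℝ))))).add
        (hP₂sl.clm_apply (continuousOn_const (c := ((0:ℝ),(1:ℝ)))))) (fun s hs => ?_)
      rw [eq₁t s hs t ht, eq₂t s hs t ht]; rfl
    have hdssl : ContinuousOn (fun s => d₁s s t + d₂s s t) (Icc (0:ℝ) m) := by
      refine ContinuousOn.congr
        (((cγ₁'.mul hu₁sl).add ((hγ₁.continuousOn).mul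
            (hP₁sl.clm_apply (continuousOn_const (c := ((1:ℝ),(0:ℝ))))))).add
          ((cγ₂'.mul hu₂sl).add ((hγ₂.continuousOn).mul
            (hP₂sl.clm_apply (continuousOn_const (c := ((1:ℝ),(0:ℝ)))))))) (fun s hs => ?_)
      rw [eq₁s s hs t ht, eq₂s s hs t ht]; rfl
    -- the FTC function H
    set H : ℝ → ℝ := fun s => (γ₁ s * u₁ s t + γ₂ s * u₂ s t) * e s with hHdef
    have hHcont : ContinuousOn H (Icc (0:ℝ) m) :=
      (((hγ₁.continuousOn).mul hu₁sl).add ((hγ₂.continuousOn).mul hu₂sl)).mul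
        hecont.continuousOn
    set H' : ℝ → ℝ := fun s => (d₁s s t + d₂s s t) * e s
      + (γ₁ s * u₁ s t + γ₂ s * u₂ s t) * (e s * (K * -g s)) with hH'def
    have hH'cont : ContinuousOn H' (Icc (0:ℝ) m) :=
      (hdssl.mul hecont.continuousOn).add
        ((((hγ₁.continuousOn).mul hu₁sl).add ((hγ₂.continuousOn).mul hu₂sl)).mul
          (hecont.continuousOn.mul (continuousOn_const.mul (hgcont.neg.continuousOn))))
    have hH'int : IntervalIntegrable H' volume 0 m := by
      apply hH'cont.mono (by rw [uIcc_of_le hm0]) |>.intervalIntegrable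
    have hHd : ∀ s ∈ Icc (0:ℝ) m, HasDerivWithinAt H (H' s) (Icc 0 m) s := by
      intro s hs
      exact ((hd₁s s hs t ht).add (hd₂s s hs t ht)).mul (hed s).hasDerivWithinAt
    have hFTC : (∫ s in (0:ℝ)..m, H' s) = H m - H 0 := by
      refine intervalIntegral.integral_eq_sub_of_hasDeriv_right_of_le hm0 hHcont
        (fun x hx => ?_) hH'int
      exact (((hHd x (Ioo_subset_Icc_self hx)).hasDerivAt
        (Icc_mem_nhds hx.1 hx.2))).hasDerivWithinAt
    have hH0 : H 0 = 0 := by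
      simp only [hHdef, hbc₁ t ht, hbc₂ t ht]; ring
    have hHm : 0 ≤ H m := by
      have h1 := hu₁nn m (right_mem_Icc.2 hm0) t ht
      have h2 := hu₂nn m (right_mem_Icc.2 hm0) t ht
      have h3 := (hγ₁pos m (right_mem_Icc.2 hm0)).le
      have h4 := (hγ₂pos m (right_mem_Icc.2 hm0)).le
      have := (hepos m).le
      simp only [hHdef]
      positivity
    -- the target integrand
    set Z : ℝ → ℝ := fun s => ((d₁t s t + d₂t s t) + K * (u₁ s t + u₂ s t)) * e s with hZdef
    have hZcont : ContinuousOn Z (Icc (0:ℝ) m) :=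
      ((hdtsl.add (continuousOn_const.mul (hu₁sl.add hu₂sl)))).mul hecont.continuousOn
    have hZint : IntervalIntegrable Z volume 0 m :=
      (hZcont.mono (by rw [uIcc_of_le hm0])).intervalIntegrable
    -- pointwise bound on Z + H'
    have hpoint : ∀ s ∈ Icc (0:ℝ) m, Z s + H' s ≤ 0 := by
      intro s hs
      have hpde : d₁t s t + d₂t s t + (d₁s s t + d₂s s t) = -(μ s) * u₁ s t := by
        have h1 := pde₁ s hs t ht; have h2 := pde₂ s hs t ht; linarith
      have hk1 := (hkey s hs).1
      have hk2 := (hkey s hs).2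
      have hu1 := hu₁nn s hs t ht
      have hu2 := hu₂nn s hs t ht
      have hμs := hμnn s hs
      have hγ1 := (hγ₁pos s hs).le
      have hγ2 := (hγ₂pos s hs).le
      have heps := hepos s
      have hcalc : Z s + H' s
          = (-(μ s) * u₁ s t + K * ((u₁ s t + u₂ s t)
            - g s * (γ₁ s * u₁ s t + γ₂ s * u₂ s t))) * e s := by
        simp only [hZdef, hH'def]; linear_combination (e s) * hpde
      rw [hcalc]
      have hb1 : u₁ s t + u₂ s t - g s * (γ₁ s * u₁ s t + γ₂ s * u₂ s t) ≤ 0 := by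
        nlinarith [mul_nonneg (sub_nonneg.2 hk1) hu1, mul_nonneg (sub_nonneg.2 hk2) hu2]
      have hb2 : -(μ s) * u₁ s t ≤ 0 := by nlinarith
      have hb3 : -(μ s) * u₁ s t + K * ((u₁ s t + u₂ s t)
          - g s * (γ₁ s * u₁ s t + γ₂ s * u₂ s t)) ≤ 0 := by
        nlinarith [mul_nonneg hK (neg_nonneg.2 hb1)]
      exact mul_nonpos_of_nonpos_of_nonneg hb3 heps.le
    have hsum : (∫ s in (0:ℝ)..m, (Z s + H' s)) ≤ 0 := by
      have h0 : (∫ s in (0:ℝ)..m, (0:ℝ)) = 0 := by simp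
      calc (∫ s in (0:ℝ)..m, (Z s + H' s))
          ≤ ∫ s in (0:ℝ)..m, (0:ℝ) :=
            intervalIntegral.integral_mono_on hm0 (hZint.add hH'int)
              intervalIntegrable_const hpoint
        _ = 0 := h0
    have hsplit : (∫ s in (0:ℝ)..m, (Z s + H' s))
        = (∫ s in (0:ℝ)..m, Z s) + ∫ s in (0:ℝ)..m, H' s :=
      intervalIntegral.integral_add hZint hH'int
    have : (∫ s in (0:ℝ)..m, Z s) ≤ 0 := by
      rw [hsplit, hFTC, hH0] at hsum
      linarith
    exact this
  -- globally continuous clamped versions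
  have hπ : Continuous fun q : ℝ × ℝ => ((ι q.1, κ q.2) : ℝ × ℝ) :=
    (hιcont.comp continuous_fst).prodMk (hκcont.comp continuous_snd)
  have hπmem : ∀ q : ℝ × ℝ, ((ι q.1, κ q.2) : ℝ × ℝ) ∈ (Icc (0:ℝ) m) ×ˢ (Icc (0:ℝ) T) :=
    fun q => ⟨hιmem q.1, hκmem q.2⟩
  have cu₁ : Continuous fun q : ℝ × ℝ => u₁ (ι q.1) (κ q.2) :=
    hu₁C.continuousOn.comp_continuous hπ hπmem
  have cu₂ : Continuous fun q : ℝ × ℝ => u₂ (ι q.1) (κ q.2) :=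
    hu₂C.continuousOn.comp_continuous hπ hπmem
  have cP₁ : Continuous fun q : ℝ × ℝ => P₁ (ι q.1, κ q.2) := hP₁c.comp_continuous hπ hπmem
  have cP₂ : Continuous fun q : ℝ × ℝ => P₂ (ι q.1, κ q.2) := hP₂c.comp_continuous hπ hπmem
  -- Step B : monotonicity of the weighted mass
  have stepB : ∀ K : ℝ, 0 ≤ K → ∀ t ∈ Icc (0:ℝ) T,
      (∫ s in (0:ℝ)..m, (u₁ s t + u₂ s t) * Real.exp (K * (t - φ s)))
        ≤ ∫ s in (0:ℝ)..m, (u₁ s 0 + u₂ s 0) * Real.exp (K * (0 - φ s)) := by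
    intro K hK t ht
    have h0mem : (0:ℝ) ∈ Icc (0:ℝ) T := left_mem_Icc.2 hT0'
    set F : ℝ → ℝ → ℝ := fun x s =>
      (u₁ (ι s) (κ x) + u₂ (ι s) (κ x)) * Real.exp (K * (x - φ s)) with hFdef
    set F' : ℝ → ℝ → ℝ := fun x s =>
      ((P₁ (ι s, κ x) (0, 1) + P₂ (ι s, κ x) (0, 1))
        + K * (u₁ (ι s) (κ x) + u₂ (ι s) (κ x))) * Real.exp (K * (x - φ s)) with hF'def
    have hswap : Continuous fun q : ℝ × ℝ => ((q.2, q.1) : ℝ × ℝ) :=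
      continuous_snd.prodMk continuous_fst
    have hexpc : Continuous fun q : ℝ × ℝ => Real.exp (K * (q.1 - φ q.2)) :=
      Real.continuous_exp.comp
        (continuous_const.mul (continuous_fst.sub (hφcont.comp continuous_snd)))
    have hFc : Continuous (Function.uncurry F) := by
      simp only [hFdef, Function.uncurry]
      exact ((cu₁.comp hswap).add (cu₂.comp hswap)).mul hexpc
    have hF'c : Continuous (Function.uncurry F') := by
      simp only [hF'def, Function.uncurry]
      refine Continuous.mul ?_ hexpc
      exact ((((cP₁.comp hswap).clm_apply (continuous_const (y := ((0:ℝ),(1:ℝ))))).add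
        ((cP₂.comp hswap).clm_apply (continuous_const (y := ((0:ℝ),(1:ℝ)))))).add
        (continuous_const.mul ((cu₁.comp hswap).add (cu₂.comp hswap))))
    set W : ℝ → ℝ := fun x => ∫ s in (0:ℝ)..m, F x s with hWdef
    have hWc : Continuous W :=
      intervalIntegral.continuous_parametric_intervalIntegral_of_continuous' hFc 0 m
    have hWd : ∀ x ∈ Ioo (0:ℝ) T, HasDerivAt W (∫ s in (0:ℝ)..m, F' x s) x := by
      intro t₀ ht₀
      set ε := min t₀ (T - t₀) with hεdef
      have hε : 0 < ε := lt_min ht₀.1 (by linarith [ht₀.2])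
      have hball : Metric.ball t₀ ε ⊆ Ioo 0 T := by
        intro x hx
        rw [Metric.mem_ball, Real.dist_eq, abs_sub_lt_iff] at hx
        constructor
        · have h1 := min_le_left t₀ (T - t₀); rw [← hεdef] at h1; linarith [hx.1]
        · have h2 := min_le_right t₀ (T - t₀); rw [← hεdef] at h2; linarith [hx.2]
      obtain ⟨C, hC⟩ := ((isCompact_closedBall t₀ ε).prod
        (isCompact_Icc (a := (0:ℝ)) (b := m))).exists_bound_of_continuousOn
        hF'c.continuousOn
      have hmain := intervalIntegral.hasDerivAt_integral_of_dominated_loc_of_deriv_le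
        (μ := volume) (a := 0) (b := m) (F := F) (F' := F') (x₀ := t₀)
        (bound := fun _ => C) (Metric.ball_mem_nhds t₀ hε)
        (Filter.Eventually.of_forall fun x =>
          (hFc.comp (continuous_const.prodMk continuous_id)).aestronglyMeasurable)
        ((hFc.comp (continuous_const.prodMk continuous_id)).continuousOn.intervalIntegrable)
        (hF'c.comp (continuous_const.prodMk continuous_id)).aestronglyMeasurable
        (Filter.Eventually.of_forall fun s hs x hx =>
          hC (x, s) ⟨Metric.ball_subset_closedBall hx,
            Ioc_subset_Icc_self (by rwa [uIoc_of_le hm0] at hs)⟩)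
        intervalIntegrable_const
        (Filter.Eventually.of_forall ?_)
      · exact hmain.2
      · intro s hs x hx
        have hsI : s ∈ Icc (0:ℝ) m := Ioc_subset_Icc_self (by rwa [uIoc_of_le hm0] at hs)
        have hxI : x ∈ Ioo (0:ℝ) T := hball hx
        have hxIcc : x ∈ Icc (0:ℝ) T := Ioo_subset_Icc_self hxI
        have h1 : HasDerivAt (fun x' => u₁ s x') (d₁t s x) x :=
          (hd₁t s hsI x hxIcc).hasDerivAt (Icc_mem_nhds hxI.1 hxI.2)
        have h2 : HasDerivAt (fun x' => u₂ s x') (d₂t s x) x :=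
          (hd₂t s hsI x hxIcc).hasDerivAt (Icc_mem_nhds hxI.1 hxI.2)
        have hexp : HasDerivAt (fun x' => Real.exp (K * (x' - φ s)))
            (Real.exp (K * (x - φ s)) * (K * 1)) x :=
          (((hasDerivAt_id x).sub_const (φ s)).const_mul K).exp
        have hprod := (h1.add h2).mul hexp
        have heq : (fun x' => F x' s) =ᶠ[nhds x]
            (fun x' => (u₁ s x' + u₂ s x') * Real.exp (K * (x' - φ s))) := by
          filter_upwards [isOpen_Ioo.mem_nhds hxI] with y hy
          simp only [hFdef, hιeq s hsI, hκeq y (Ioo_subset_Icc_self hy)]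
        have hval : F' x s = (d₁t s x + d₂t s x) * Real.exp (K * (x - φ s))
            + (u₁ s x + u₂ s x) * (Real.exp (K * (x - φ s)) * (K * 1)) := by
          simp only [hF'def, hιeq s hsI, hκeq x hxIcc]
          rw [← eq₁t s hsI x hxIcc, ← eq₂t s hsI x hxIcc]; ring
        rw [hval]
        exact hprod.congr_of_eventuallyEq heq
    have hD : ∀ x ∈ Ioo (0:ℝ) T, (∫ s in (0:ℝ)..m, F' x s) ≤ 0 := by
      intro x hx
      have hxIcc := Ioo_subset_Icc_self hx
      have hcongr : (∫ s in (0:ℝ)..m, F' x s)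
          = ∫ s in (0:ℝ)..m,
              ((d₁t s x + d₂t s x) + K * (u₁ s x + u₂ s x)) * Real.exp (K * (x - φ s)) := by
        refine intervalIntegral.integral_congr fun s hs => ?_
        rw [uIcc_of_le hm0] at hs
        simp only [hF'def, hιeq s hs, hκeq x hxIcc]
        rw [← eq₁t s hs x hxIcc, ← eq₂t s hs x hxIcc]
      rw [hcongr]; exact stepA K hK x hxIcc
    have hanti : AntitoneOn W (Icc (0:ℝ) T) := by
      apply antitoneOn_of_deriv_nonpos (convex_Icc _ _) hWc.continuousOn
      · intro x hx; rw [interior_Icc] at hx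
        exact (hWd x hx).differentiableAt.differentiableWithinAt
      · intro x hx; rw [interior_Icc] at hx
        rw [(hWd x hx).deriv]; exact hD x hx
    have hWle : W t ≤ W 0 := hanti (left_mem_Icc.2 hT0') ht ht.1
    have hWt : W t = ∫ s in (0:ℝ)..m, (u₁ s t + u₂ s t) * Real.exp (K * (t - φ s)) := by
      refine intervalIntegral.integral_congr fun s hs => ?_
      rw [uIcc_of_le hm0] at hs
      simp only [hFdef, hιeq s hs, hκeq t ht]
    have hW0 : W 0 = ∫ s in (0:ℝ)..m, (u₁ s 0 + u₂ s 0) * Real.exp (K * (0 - φ s)) := by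
      refine intervalIntegral.integral_congr fun s hs => ?_
      rw [uIcc_of_le hm0] at hs
      simp only [hFdef, hιeq s hs, hκeq 0 h0mem]
    rw [← hWt, ← hW0]; exact hWle
  -- continuity of slices in s, for fixed time
  have huscont : ∀ t ∈ Icc (0:ℝ) T, ContinuousOn (fun s => u₁ s t + u₂ s t) (Icc (0:ℝ) m) := by
    intro t ht
    have hslice : ContinuousOn (fun s => ((s, t) : ℝ × ℝ)) (Icc (0:ℝ) m) :=
      (continuous_id.prodMk continuous_const).continuousOn
    have hsliceMem : MapsTo (fun s => ((s, t) : ℝ × ℝ)) (Icc (0:ℝ) m)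
        ((Icc (0:ℝ) m) ×ˢ (Icc (0:ℝ) T)) := fun s hs => ⟨hs, ht⟩
    exact (hu₁C.continuousOn.comp hslice hsliceMem).add
      (hu₂C.continuousOn.comp hslice hsliceMem)
  have h0mem : (0:ℝ) ∈ Icc (0:ℝ) T := left_mem_Icc.2 hT0'
  -- Main conclusion for t > τ
  have main : ∀ t, τ < t → t ≤ T → ∀ s ∈ Icc (0:ℝ) m, u₁ s t = 0 ∧ u₂ s t = 0 := by
    intro t hτt htT
    have ht : t ∈ Icc (0:ℝ) T := ⟨le_trans hτ0 hτt.le, htT⟩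
    set I := ∫ s in (0:ℝ)..m, (u₁ s t + u₂ s t) with hIdef
    set M := ∫ s in (0:ℝ)..m, (u₁ s 0 + u₂ s 0) with hMdef
    have hIb : ∀ n : ℕ, I ≤ Real.exp (-((n:ℝ) * (t - τ))) * M := by
      intro n
      have hK : (0:ℝ) ≤ (n:ℝ) := Nat.cast_nonneg n
      have hB := stepB (n:ℝ) hK t ht
      have hexpC : Continuous fun s => Real.exp ((n:ℝ) * (t - φ s)) :=
        Real.continuous_exp.comp (continuous_const.mul (continuous_const.sub hφcont))
      have hexpC0 : Continuous fun s => Real.exp ((n:ℝ) * (0 - φ s)) :=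
        Real.continuous_exp.comp (continuous_const.mul (continuous_const.sub hφcont))
      have hint1 : IntervalIntegrable
          (fun s => Real.exp ((n:ℝ) * (t - τ)) * (u₁ s t + u₂ s t)) volume 0 m :=
        ((continuousOn_const.mul ((huscont t ht).mono (by rw [uIcc_of_le hm0])))).intervalIntegrable
      have hint2 : IntervalIntegrable
          (fun s => (u₁ s t + u₂ s t) * Real.exp ((n:ℝ) * (t - φ s))) volume 0 m :=
        ((((huscont t ht).mono (by rw [uIcc_of_le hm0]))).mul
          hexpC.continuousOn).intervalIntegrable
      have hint3 : IntervalIntegrable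
          (fun s => (u₁ s 0 + u₂ s 0) * Real.exp ((n:ℝ) * (0 - φ s))) volume 0 m :=
        ((((huscont 0 h0mem).mono (by rw [uIcc_of_le hm0]))).mul
          hexpC0.continuousOn).intervalIntegrable
      have hint4 : IntervalIntegrable (fun s => u₁ s 0 + u₂ s 0) volume 0 m :=
        ((huscont 0 h0mem).mono (by rw [uIcc_of_le hm0])).intervalIntegrable
      have hl : Real.exp ((n:ℝ) * (t - τ)) * I
          ≤ ∫ s in (0:ℝ)..m, (u₁ s t + u₂ s t) * Real.exp ((n:ℝ) * (t - φ s)) := by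
        rw [hIdef, ← intervalIntegral.integral_const_mul]
        refine intervalIntegral.integral_mono_on hm0 hint1 hint2 (fun s hs => ?_)
        have hexple : Real.exp ((n:ℝ) * (t - τ)) ≤ Real.exp ((n:ℝ) * (t - φ s)) := by
          apply Real.exp_le_exp.2
          apply mul_le_mul_of_nonneg_left (by linarith [hφle s hs]) hK
        have hnn := add_nonneg (hu₁nn s hs t ht) (hu₂nn s hs t ht)
        calc Real.exp ((n:ℝ) * (t - τ)) * (u₁ s t + u₂ s t)
            ≤ Real.exp ((n:ℝ) * (t - φ s)) * (u₁ s t + u₂ s t) :=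
              mul_le_mul_of_nonneg_right hexple hnn
          _ = (u₁ s t + u₂ s t) * Real.exp ((n:ℝ) * (t - φ s)) := by ring
      have hr : (∫ s in (0:ℝ)..m, (u₁ s 0 + u₂ s 0) * Real.exp ((n:ℝ) * (0 - φ s))) ≤ M := by
        rw [hMdef]
        refine intervalIntegral.integral_mono_on hm0 hint3 hint4 (fun s hs => ?_)
        have hexple : Real.exp ((n:ℝ) * (0 - φ s)) ≤ 1 := by
          apply Real.exp_le_one_iff.2
          have h1 := hφnn s hs
          nlinarith
        have hnn := add_nonneg (hu₁nn s hs 0 h0mem) (hu₂nn s hs 0 h0mem)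
        nlinarith
      have hcomb : Real.exp ((n:ℝ) * (t - τ)) * I ≤ M := le_trans hl (le_trans hB hr)
      calc I = Real.exp (-((n:ℝ) * (t - τ))) * (Real.exp ((n:ℝ) * (t - τ)) * I) := by
            rw [← mul_assoc, ← Real.exp_add]; simp
        _ ≤ Real.exp (-((n:ℝ) * (t - τ))) * M :=
            mul_le_mul_of_nonneg_left hcomb (Real.exp_pos _).le
    have hlim : Filter.Tendsto (fun n : ℕ => Real.exp (-((n:ℝ) * (t - τ))) * M)
        Filter.atTop (nhds 0) := by
      rw [show (0:ℝ) = 0 * M by ring]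
      apply Filter.Tendsto.mul_const
      apply Real.tendsto_exp_atBot.comp
      apply Filter.tendsto_neg_atBot_iff.mpr
      exact Filter.Tendsto.atTop_mul_const (by linarith) tendsto_natCast_atTop_atTop
    have hI0 : I ≤ 0 := ge_of_tendsto hlim (Filter.Eventually.of_forall hIb)
    have hInn : 0 ≤ I := by
      rw [hIdef]
      exact intervalIntegral.integral_nonneg hm0
        (fun s hs => add_nonneg (hu₁nn s hs t ht) (hu₂nn s hs t ht))
    have hIz : I = 0 := le_antisymm hI0 hInn
    intro s hs
    have hcl : Continuous fun s' => u₁ (ι s') (κ t) + u₂ (ι s') (κ t) :=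
      (cu₁.comp (continuous_id.prodMk continuous_const)).add
        (cu₂.comp (continuous_id.prodMk continuous_const))
    have hclnn : ∀ s', 0 ≤ u₁ (ι s') (κ t) + u₂ (ι s') (κ t) := fun s' =>
      add_nonneg (hu₁nn _ (hιmem s') _ (hκmem t)) (hu₂nn _ (hιmem s') _ (hκmem t))
    have hclint : (∫ x in (0:ℝ)..m, (u₁ (ι x) (κ t) + u₂ (ι x) (κ t))) = 0 := by
      have heqI : (∫ x in (0:ℝ)..m, (u₁ (ι x) (κ t) + u₂ (ι x) (κ t))) = I := by
        rw [hIdef]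
        refine intervalIntegral.integral_congr fun x hx => ?_
        rw [uIcc_of_le hm0] at hx
        rw [hιeq x hx, hκeq t ht]
      rw [heqI, hIz]
    have hz := aux_zero_of_integral_zero hm hcl hclnn hclint hs
    rw [hιeq s hs, hκeq t ht] at hz
    have h1 := hu₁nn s hs t ht
    have h2 := hu₂nn s hs t ht
    constructor <;> linarith
  -- Conclusion, including the boundary case t = τ
  intro s hs t hτt htT
  rcases eq_or_lt_of_le hτt with heq | hlt
  · subst heq
    haveI hne : Filter.NeBot (nhdsWithin τ (Ioc τ T)) := left_nhdsWithin_Ioc_neBot hT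
    have hτmem : τ ∈ Icc (0:ℝ) T := ⟨hτ0, hT.le⟩
    have hIocsub : Ioc τ T ⊆ Icc (0:ℝ) T := fun x hx => ⟨le_trans hτ0 hx.1.le, hx.2⟩
    have hsl : ∀ (u : ℝ → ℝ → ℝ),
        ContDiffOn ℝ 1 (fun p : ℝ × ℝ => u p.1 p.2) ((Icc (0:ℝ) m) ×ˢ (Icc (0:ℝ) T)) →
        (∀ x ∈ Ioc τ T, u s x = 0) → u s τ = 0 := by
      intro u hC hzero
      have hcont : ContinuousWithinAt (fun t' => u s t') (Icc (0:ℝ) T) τ := by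
        have := (hC.continuousOn.comp
          (continuous_const.prodMk continuous_id).continuousOn
          (fun t' (ht' : t' ∈ Icc (0:ℝ) T) => ⟨hs, ht'⟩)) τ hτmem
        exact this
      have h1 : Filter.Tendsto (fun t' => u s t') (nhdsWithin τ (Ioc τ T))
          (nhds (u s τ)) := hcont.mono hIocsub
      have h2 : Filter.Tendsto (fun t' => u s t') (nhdsWithin τ (Ioc τ T)) (nhds 0) := by
        apply Filter.Tendsto.congr' _ tendsto_const_nhds
        filter_upwards [eventually_mem_nhdsWithin] with x hx
        exact (hzero x hx).symm
      exact tendsto_nhds_unique h1 h2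
    constructor
    · exact hsl u₁ hu₁C (fun x hx => (main x hx.1 hx.2 s hs).1)
    · exact hsl u₂ hu₂C (fun x hx => (main x hx.1 hx.2 s hs).2)
  · exact main t hlt htT s hs
end
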